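/- arXiv:1511.08499 — 6 statements merged into one kernel-verified Lean document; each statement's English description precedes it below -/
import Mathlib

section
/- If a quadratic form E on an algebra A of bounded real-valued functions satisfies that normal contractions operate on it, then for all f, g in A one has E(fg)^{1/2} ≤ ‖f‖_sup · E(g)^{1/2} + ‖g‖_sup · E(f)^{1/2}. -/
open scoped ENNReal BigOperators

/-- A normal contraction in `k` variables. -/
def IsNormalContraction {k : ℕ} (F : (Fin k → ℝ) → ℝ) : Prop :=
  F 0 = 0 ∧ ∀ x y : Fin k → ℝ, |F x - F y| ≤ ∑ i, |x i - y i|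

/-- Normal contractions operate on a quadratic form `E` on `A`. -/
def NormalContractionsOperate {X : Type*} (A : Set (X → ℝ)) (E : (X → ℝ) → ℝ≥0∞) : Prop :=
  ∀ (k : ℕ) (F : (Fin k → ℝ) → ℝ), IsNormalContraction F →
    ∀ f : Fin k → X → ℝ, (∀ i, f i ∈ A) →
      E (fun x => F (fun i => f i x)) ^ (1/2 : ℝ) ≤ ∑ i, E (f i) ^ (1/2 : ℝ)

/-!
Let `a = ‖f‖_sup` and `b = ‖g‖_sup`. On the rectangle `[-a, a] × [-b, b]` the product
`(u, v) ↦ u v` satisfies `|u v - u' v'| ≤ b |u - u'| + a |v - v'|`; clipping both coordinates to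
that rectangle extends it to a map on all of `ℝ²` with the same Lipschitz bound. Rescaling the
coordinates by `1/b` and `1/a` turns it into a normal contraction `F` with
`F(b f, a g) = f g`, so
`E(f g)^{1/2} ≤ E(b f)^{1/2} + E(a g)^{1/2} = b E(f)^{1/2} + a E(g)^{1/2}`.
-/

def clip (c s : ℝ) : ℝ := max (-c) (min c s)

lemma clip_zero_left (s : ℝ) : clip 0 s = 0 := by
  simp [clip]

lemma clip_zero_right {c : ℝ} (hc : 0 ≤ c) : clip c 0 = 0 := by
  simp [clip, hc]

lemma abs_clip_le {c : ℝ} (hc : 0 ≤ c) (s : ℝ) : |clip c s| ≤ c :=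
  abs_le.2 ⟨le_max_left _ _, max_le (by linarith) (min_le_left _ _)⟩

lemma clip_of_abs_le {c s : ℝ} (h : |s| ≤ c) : clip c s = s := by
  rw [abs_le] at h
  rw [clip, min_eq_right h.2, max_eq_right h.1]

lemma abs_clip_sub_clip_le (c s t : ℝ) : |clip c s - clip c t| ≤ |s - t| :=
  calc |clip c s - clip c t|
      ≤ max |(-c) - (-c)| |min c s - min c t| := abs_max_sub_max_le_max _ _ _ _
    _ = |min c s - min c t| := by simp
    _ ≤ max |c - c| |s - t| := abs_min_sub_min_le_max _ _ _ _
    _ = |s - t| := by simp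

lemma abs_clip_mul_clip_sub_le {a b : ℝ} (ha : 0 ≤ a) (hb : 0 ≤ b) (u v u' v' : ℝ) :
    |clip a u * clip b v - clip a u' * clip b v'| ≤ b * |u - u'| + a * |v - v'| := by
  have hsplit : clip a u * clip b v - clip a u' * clip b v' =
      clip a u * (clip b v - clip b v') + (clip a u - clip a u') * clip b v' := by ring
  calc |clip a u * clip b v - clip a u' * clip b v'|
      ≤ |clip a u| * |clip b v - clip b v'| + |clip a u - clip a u'| * |clip b v'| := by
        rw [hsplit, ← abs_mul, ← abs_mul]
        exact abs_add_le _ _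
    _ ≤ a * |v - v'| + |u - u'| * b :=
        add_le_add
          (mul_le_mul (abs_clip_le ha _) (abs_clip_sub_clip_le _ _ _) (abs_nonneg _) ha)
          (mul_le_mul (abs_clip_sub_clip_le _ _ _) (abs_clip_le hb _) (abs_nonneg _)
            (abs_nonneg _))
    _ = b * |u - u'| + a * |v - v'| := by ring

lemma mul_abs_div_sub_div_le (c s t : ℝ) : c * |s / c - t / c| ≤ |s - t| := by
  rcases eq_or_ne c 0 with rfl | hc
  · simp
  · rw [← sub_div, abs_div, mul_div_assoc', div_le_iff₀ (abs_pos.2 hc), mul_comm]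
    gcongr
    exact le_abs_self c

lemma isNormalContraction_clip_mul_clip {a b : ℝ} (ha : 0 ≤ a) (hb : 0 ≤ b) :
    IsNormalContraction fun x : Fin 2 → ℝ => clip a (x 0 / b) * clip b (x 1 / a) := by
  refine ⟨by simp [clip_zero_right ha], fun x y => ?_⟩
  rw [Fin.sum_univ_two]
  calc |clip a (x 0 / b) * clip b (x 1 / a) - clip a (y 0 / b) * clip b (y 1 / a)|
      ≤ b * |x 0 / b - y 0 / b| + a * |x 1 / a - y 1 / a| :=
        abs_clip_mul_clip_sub_le ha hb _ _ _ _
    _ ≤ |x 0 - y 0| + |x 1 - y 1| :=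
        add_le_add (mul_abs_div_sub_div_le _ _ _) (mul_abs_div_sub_div_le _ _ _)

-- If `b = 0` the quotient `b * s / b` is junk, but then `t = 0` and `clip 0` kills the product.
lemma clip_mul_div_mul_clip_mul_div {a b s t : ℝ} (hs : |s| ≤ a) (ht : |t| ≤ b) :
    clip a (b * s / b) * clip b (a * t / a) = s * t := by
  rcases eq_or_ne b 0 with rfl | hb
  · simp [abs_nonpos_iff.1 ht, clip_zero_left]
  rcases eq_or_ne a 0 with rfl | ha
  · simp [abs_nonpos_iff.1 hs, clip_zero_left]
  rw [mul_div_cancel_left₀ _ hb, mul_div_cancel_left₀ _ ha, clip_of_abs_le hs,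
    clip_of_abs_le ht]

lemma ENNReal.ofReal_sq_rpow_half (c : ℝ) :
    ENNReal.ofReal (c ^ 2) ^ (1/2 : ℝ) = ENNReal.ofReal |c| := by
  rw [ENNReal.ofReal_rpow_of_nonneg (sq_nonneg c) (by norm_num), ← Real.sqrt_eq_rpow,
    Real.sqrt_sq_eq_abs]

section SupNorm

variable {X : Type*} {f : X → ℝ}

lemma iSup_ofReal_abs_ne_top (hf : ∃ C : ℝ, ∀ x, |f x| ≤ C) :
    (⨆ x, ENNReal.ofReal |f x|) ≠ ∞ := by
  obtain ⟨C, hC⟩ := hf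
  exact ne_top_of_le_ne_top ENNReal.ofReal_ne_top
    (iSup_le fun x => ENNReal.ofReal_le_ofReal (hC x))

lemma abs_le_toReal_iSup_ofReal_abs (hf : ∃ C : ℝ, ∀ x, |f x| ≤ C) (x : X) :
    |f x| ≤ (⨆ x, ENNReal.ofReal |f x|).toReal := by
  rw [← ENNReal.toReal_ofReal (abs_nonneg (f x))]
  exact ENNReal.toReal_mono (iSup_ofReal_abs_ne_top hf)
    (le_iSup (fun x => ENNReal.ofReal |f x|) x)

end SupNorm

theorem stmt0_general {X : Type*} (A : Set (X → ℝ)) (E : (X → ℝ) → ℝ≥0∞)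
    (hAsmul : ∀ (c : ℝ), ∀ f ∈ A, c • f ∈ A)
    (hbdd : ∀ f ∈ A, ∃ C : ℝ, ∀ x, |f x| ≤ C)
    (hscale : ∀ (c : ℝ) (f : X → ℝ), f ∈ A → E (c • f) = ENNReal.ofReal (c ^ 2) * E f)
    (hop : NormalContractionsOperate A E) :
    ∀ f ∈ A, ∀ g ∈ A,
      E (f * g) ^ (1/2 : ℝ) ≤
        (⨆ x, ENNReal.ofReal |f x|) * E g ^ (1/2 : ℝ) +
        (⨆ x, ENNReal.ofReal |g x|) * E f ^ (1/2 : ℝ) := by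
  intro f hf g hg
  have hhalf : ∀ (c : ℝ), ∀ h ∈ A,
      E (c • h) ^ (1/2 : ℝ) = ENNReal.ofReal |c| * E h ^ (1/2 : ℝ) :=
    fun c h hh => by
      rw [hscale c h hh, ENNReal.mul_rpow_of_nonneg _ _ (by norm_num),
        ENNReal.ofReal_sq_rpow_half]
  set a := (⨆ x, ENNReal.ofReal |f x|).toReal
  set b := (⨆ x, ENNReal.ofReal |g x|).toReal
  have ha : 0 ≤ a := ENNReal.toReal_nonneg
  have hb : 0 ≤ b := ENNReal.toReal_nonneg
  have hfg :
      (fun x => clip a (![b • f, a • g] 0 x / b) * clip b (![b • f, a • g] 1 x / a)) = f * g :=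
    funext fun x => clip_mul_div_mul_clip_mul_div
      (abs_le_toReal_iSup_ofReal_abs (hbdd f hf) x)
      (abs_le_toReal_iSup_ofReal_abs (hbdd g hg) x)
  have hcontract := hop 2 _ (isNormalContraction_clip_mul_clip ha hb) ![b • f, a • g]
    (Fin.forall_fin_two.2 ⟨hAsmul b f hf, hAsmul a g hg⟩)
  rw [hfg, Fin.sum_univ_two] at hcontract
  simp only [Matrix.cons_val_zero, Matrix.cons_val_one] at hcontract
  rw [hhalf b f hf, hhalf a g hg, abs_of_nonneg ha, abs_of_nonneg hb,
    ENNReal.ofReal_toReal (iSup_ofReal_abs_ne_top (hbdd f hf)),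
    ENNReal.ofReal_toReal (iSup_ofReal_abs_ne_top (hbdd g hg))] at hcontract
  exact hcontract.trans_eq (add_comm _ _)

theorem stmt0 {X : Type*} [Nonempty X] (A : Set (X → ℝ)) (E : (X → ℝ) → ℝ≥0∞)
    (hAadd : ∀ f ∈ A, ∀ g ∈ A, f + g ∈ A)
    (hAmul : ∀ f ∈ A, ∀ g ∈ A, f * g ∈ A)
    (hAsmul : ∀ (c : ℝ), ∀ f ∈ A, c • f ∈ A)
    (hbdd : ∀ f ∈ A, ∃ C : ℝ, ∀ x, |f x| ≤ C)
    (hscale : ∀ (c : ℝ) (f : X → ℝ), f ∈ A → E (c • f) = ENNReal.ofReal (c ^ 2) * E f)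
    (hpar : ∀ f g : X → ℝ, f ∈ A → g ∈ A → E f < ∞ → E g < ∞ →
      E (f + g) + E (f - g) = 2 * E f + 2 * E g)
    (hop : NormalContractionsOperate A E) :
    ∀ f ∈ A, ∀ g ∈ A,
      E (f * g) ^ (1/2 : ℝ) ≤
        (⨆ x, ENNReal.ofReal |f x|) * E g ^ (1/2 : ℝ) +
        (⨆ x, ENNReal.ofReal |g x|) * E f ^ (1/2 : ℝ) :=
  stmt0_general A E hAsmul hbdd hscale hop
end

section
/- If normal contractions operate on a quadratic form E on an algebra A of bounded real-valued functions, then the effective domain D = {f ∈ A : E(f) < ∞} is closed under pointwise multiplication, i.e. f, g ∈ D implies fg ∈ D. -/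
open scoped ENNReal BigOperators

/-- The effective domain `D = {f ∈ A : E f < ∞}` is closed under pointwise
multiplication. -/
theorem stmt1 {X : Type*} [Nonempty X] (A : Set (X → ℝ)) (E : (X → ℝ) → ℝ≥0∞)
    (hAadd : ∀ f ∈ A, ∀ g ∈ A, f + g ∈ A)
    (hAmul : ∀ f ∈ A, ∀ g ∈ A, f * g ∈ A)
    (hAsmul : ∀ (c : ℝ), ∀ f ∈ A, c • f ∈ A)
    (hbdd : ∀ f ∈ A, ∃ C : ℝ, ∀ x, |f x| ≤ C)
    (hscale : ∀ (c : ℝ) (f : X → ℝ), f ∈ A → E (c • f) = ENNReal.ofReal (c ^ 2) * E f)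
    (hpar : ∀ f g : X → ℝ, f ∈ A → g ∈ A → E f < ∞ → E g < ∞ →
      E (f + g) + E (f - g) = 2 * E f + 2 * E g)
    (hop : NormalContractionsOperate A E) :
    ∀ f ∈ {h ∈ A | E h < ∞}, ∀ g ∈ {h ∈ A | E h < ∞}, f * g ∈ {h ∈ A | E h < ∞} := by
  rintro f ⟨hfA, hfE⟩ g ⟨hgA, hgE⟩
  obtain ⟨Cf, hCf⟩ := hbdd f hfA
  obtain ⟨Cg, hCg⟩ := hbdd g hgA
  set C : ℝ := max (max Cf Cg) 1 with hC
  have hC1 : (1 : ℝ) ≤ C := le_max_right _ _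
  have hC0 : (0 : ℝ) < C := lt_of_lt_of_le one_pos hC1
  have hfC : ∀ x, |f x| ≤ C := fun x =>
    (hCf x).trans ((le_max_left Cf Cg).trans (le_max_left _ _))
  have hgC : ∀ x, |g x| ≤ C := fun x =>
    (hCg x).trans ((le_max_right Cf Cg).trans (le_max_left _ _))
  -- truncation
  set τ : ℝ → ℝ := fun t => min (max t (-C)) C with hτdef
  have hτlip : ∀ a b : ℝ, |τ a - τ b| ≤ |a - b| := by
    intro a b
    have h := ((LipschitzWith.id.max_const (-C)).min_const C).dist_le_mul a b
    simpa [Real.dist_eq, τ] using h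
  have hτbd : ∀ t : ℝ, |τ t| ≤ C := by
    intro t
    rw [abs_le]
    constructor
    · exact le_min (le_max_right _ _) (by linarith)
    · exact min_le_right _ _
  have hτeq : ∀ t : ℝ, |t| ≤ C → τ t = t := by
    intro t ht
    rw [abs_le] at ht
    simp [τ, max_eq_left ht.1, min_eq_left ht.2]
  -- the normal contraction
  set F : (Fin 2 → ℝ) → ℝ := fun x => (2 * C)⁻¹ * (τ (x 0) * τ (x 1)) with hF
  have hFnc : IsNormalContraction F := by
    constructor
    · have : τ 0 = 0 := hτeq 0 (by simp; linarith)
      simp [F, this]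
    · intro x y
      have h1 := hτlip (x 0) (y 0)
      have h2 := hτlip (x 1) (y 1)
      have b1 := hτbd (x 0)
      have b2 := hτbd (y 1)
      have key : |F x - F y| ≤ (2 * C)⁻¹ * (C * |x 1 - y 1| + C * |x 0 - y 0|) := by
        have : F x - F y = (2 * C)⁻¹ * (τ (x 0) * (τ (x 1) - τ (y 1))
            + τ (y 1) * (τ (x 0) - τ (y 0))) := by simp only [F]; ring
        rw [this, abs_mul, abs_of_nonneg (by positivity : (0:ℝ) ≤ (2*C)⁻¹)]
        gcongr
        calc |τ (x 0) * (τ (x 1) - τ (y 1)) + τ (y 1) * (τ (x 0) - τ (y 0))|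
            ≤ |τ (x 0) * (τ (x 1) - τ (y 1))| + |τ (y 1) * (τ (x 0) - τ (y 0))| :=
              abs_add_le _ _
          _ = |τ (x 0)| * |τ (x 1) - τ (y 1)| + |τ (y 1)| * |τ (x 0) - τ (y 0)| := by
              rw [abs_mul, abs_mul]
          _ ≤ C * |x 1 - y 1| + C * |x 0 - y 0| := by
              gcongr <;> first
                | exact abs_nonneg _ | exact b1 | exact b2 | exact h1 | exact h2
      have : (2 * C)⁻¹ * (C * |x 1 - y 1| + C * |x 0 - y 0|)
          ≤ |x 0 - y 0| + |x 1 - y 1| := by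
        rw [inv_mul_le_iff₀ (by positivity)]
        have a0 : (0:ℝ) ≤ |x 0 - y 0| := abs_nonneg _
        have a1 : (0:ℝ) ≤ |x 1 - y 1| := abs_nonneg _
        nlinarith
      calc |F x - F y| ≤ _ := key
        _ ≤ |x 0 - y 0| + |x 1 - y 1| := this
        _ = ∑ i, |x i - y i| := by rw [Fin.sum_univ_two]
  -- apply hop with the pair (f, g)
  set fv : Fin 2 → X → ℝ := ![f, g] with hfv
  have hfvA : ∀ i, fv i ∈ A := by
    intro i
    fin_cases i <;> simpa [fv] using ‹_›
  have hopfg := hop 2 F hFnc fv hfvA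
  -- identify the contracted function
  have heqfun : (fun x => F (fun i => fv i x)) = (2 * C)⁻¹ • (f * g) := by
    funext x
    simp only [F, fv, Pi.smul_apply, Pi.mul_apply, smul_eq_mul]
    rw [show (![f, g] : Fin 2 → X → ℝ) 0 x = f x from rfl,
        show (![f, g] : Fin 2 → X → ℝ) 1 x = g x from rfl,
        hτeq _ (hfC x), hτeq _ (hgC x)]
  rw [heqfun] at hopfg
  -- finiteness of RHS
  have hfin : (∑ i, E (fv i) ^ (1/2 : ℝ)) < ∞ := by
    rw [Fin.sum_univ_two]
    have h0 : E (fv 0) = E f := by simp [fv]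
    have h1 : E (fv 1) = E g := by simp [fv]
    rw [h0, h1]
    exact ENNReal.add_lt_top.mpr
      ⟨ENNReal.rpow_lt_top_of_nonneg (by norm_num) hfE.ne,
       ENNReal.rpow_lt_top_of_nonneg (by norm_num) hgE.ne⟩
  have hlt : E ((2 * C)⁻¹ • (f * g)) < ∞ := by
    by_contra h
    push_neg at h
    have htop : E ((2 * C)⁻¹ • (f * g)) = ∞ := top_le_iff.mp h
    rw [htop] at hopfg
    rw [ENNReal.top_rpow_of_pos (by norm_num)] at hopfg
    exact hfin.ne (top_le_iff.mp hopfg)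
  -- rescale back
  have hmemA : f * g ∈ A := hAmul f hfA g hgA
  have hmemA' : (2 * C)⁻¹ • (f * g) ∈ A := hAsmul _ _ hmemA
  have hE : E ((2 * C) • ((2 * C)⁻¹ • (f * g))) =
      ENNReal.ofReal ((2 * C) ^ 2) * E ((2 * C)⁻¹ • (f * g)) :=
    hscale (2 * C) _ hmemA'
  have hsmul : (2 * C) • ((2 * C)⁻¹ • (f * g)) = f * g := by
    rw [smul_smul, mul_inv_cancel₀ (by positivity), one_smul]
  rw [hsmul] at hE
  refine ⟨hmemA, ?_⟩
  rw [hE]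
  exact ENNReal.mul_lt_top ENNReal.ofReal_lt_top hlt
end

section
/- Under the hypotheses above, the forms E^{(n)}(f) = 2^n⟨f − P_{2^{-n}}f, f⟩ converge to E in the sense of Mosco as n → ∞: (i) for any sequence f_n → f weakly in H, E(f) ≤ liminf_n E^{(n)}(f_n); (ii) for any f ∈ H there is a sequence f_n → f strongly with limsup_n E^{(n)}(f_n) ≤ E(f) (the constant sequence f_n = f works). -/
/-!
Write `ψₜ(x) = ⟪x - Pₜ x, x⟫ = ‖x‖² - ‖P_{t/2} x‖²`. The function `u ↦ ‖Pᵤ x‖²` is nonincreasing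
and midpoint convex (`‖P_{u+h} x‖² = ⟪Pᵤ x, P_{u+2h} x⟫`), so `ψ` is nondecreasing in `t` and
`ψ_{ks} ≤ k ψ_s`. Hence `E⁽ⁿ⁾(x)` is nondecreasing in `n`, and comparing `t` with the dyadic
multiple `⌈2ⁿ t⌉ 2⁻ⁿ ≥ t` gives `E = supₙ E⁽ⁿ⁾`. Each `E⁽ᵐ⁾` is a nonnegative continuous quadratic
form, hence weakly lower semicontinuous, so `E⁽ᵐ⁾(g) ≤ liminf E⁽ᵐ⁾(fₙ) ≤ liminf E⁽ⁿ⁾(fₙ)`, and the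
supremum over `m` is (i). For (ii) the constant sequence works because `E⁽ⁿ⁾ ≤ E`.
-/

open scoped ENNReal RealInnerProductSpace
open Filter Topology

section

variable {H : Type*} [NormedAddCommGroup H] [InnerProductSpace ℝ H]

section Contraction

variable {T : H →L[ℝ] H}

lemma inner_sub_apply_self_nonneg (hT : ‖T‖ ≤ 1) (x : H) : 0 ≤ ⟪x - T x, x⟫ := by
  have hTx : ‖T x‖ ≤ ‖x‖ := T.le_of_opNorm_le hT x |>.trans_eq (one_mul _)
  rw [inner_sub_left, real_inner_self_eq_norm_mul_norm, sub_nonneg]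
  exact (real_inner_le_norm _ _).trans (mul_le_mul_of_nonneg_right hTx (norm_nonneg x))

lemma two_mul_inner_sub_apply_sub_le (hT : ‖T‖ ≤ 1) (hsymm : (T : H →ₗ[ℝ] H).IsSymmetric)
    (x g : H) : 2 * ⟪x - T x, g⟫ - ⟪g - T g, g⟫ ≤ ⟪x - T x, x⟫ := by
  have h := inner_sub_apply_self_nonneg hT (x - g)
  have hTxg : ⟪T x, g⟫ = ⟪T g, x⟫ := by rw [real_inner_comm]; exact (hsymm g x).symm
  simp only [map_sub, inner_sub_left, inner_sub_right] at h ⊢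
  linarith [real_inner_comm x g]

lemma ofReal_mul_inner_sub_apply_self_le_liminf (hT : ‖T‖ ≤ 1)
    (hsymm : (T : H →ₗ[ℝ] H).IsSymmetric) {c : ℝ} (hc : 0 ≤ c) {f : ℕ → H} {g : H}
    (hfg : ∀ y : H, Tendsto (fun n => ⟪f n, y⟫) atTop (𝓝 ⟪g, y⟫)) :
    ENNReal.ofReal (c * ⟪g - T g, g⟫) ≤
      liminf (fun n => ENNReal.ofReal (c * ⟪f n - T (f n), f n⟫)) atTop := by
  have hmove : ∀ x, ⟪x - T x, g⟫ = ⟪x, g - T g⟫ := fun x => by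
    rw [inner_sub_left, inner_sub_right]
    exact congrArg (⟪x, g⟫ - ·) (hsymm x g)
  have hlin : Tendsto (fun n => ⟪f n - T (f n), g⟫) atTop (𝓝 ⟪g - T g, g⟫) := by
    simpa only [hmove] using hfg (g - T g)
  have hlow : Tendsto (fun n => ENNReal.ofReal (c * (2 * ⟪f n - T (f n), g⟫ - ⟪g - T g, g⟫)))
      atTop (𝓝 (ENNReal.ofReal (c * ⟪g - T g, g⟫))) := by
    refine ENNReal.tendsto_ofReal ?_
    convert ((hlin.const_mul 2).sub_const ⟪g - T g, g⟫).const_mul c using 2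
    ring
  rw [← hlow.liminf_eq]
  refine liminf_le_liminf (Eventually.of_forall fun n => ?_)
  exact ENNReal.ofReal_le_ofReal
    (mul_le_mul_of_nonneg_left (two_mul_inner_sub_apply_sub_le hT hsymm _ _) hc)

end Contraction

structure IsSymmContractionSemigroup (P : ℝ → H →L[ℝ] H) : Prop where
  map_zero : P 0 = ContinuousLinearMap.id ℝ H
  map_add : ∀ s t : ℝ, 0 ≤ s → 0 ≤ t → P (s + t) = (P s).comp (P t)
  isSymmetric : ∀ t : ℝ, 0 ≤ t → (P t : H →ₗ[ℝ] H).IsSymmetric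
  norm_le_one : ∀ t : ℝ, 0 ≤ t → ‖P t‖ ≤ 1

namespace IsSymmContractionSemigroup

variable {P : ℝ → H →L[ℝ] H}

lemma inner_apply_apply (hP : IsSymmContractionSemigroup P) {u v : ℝ} (hu : 0 ≤ u) (hv : 0 ≤ v)
    (x : H) : ⟪P u x, P v x⟫ = ⟪P (u + v) x, x⟫ := by
  rw [hP.map_add u v hu hv, real_inner_comm]
  exact (hP.isSymmetric u hu _ _).symm

lemma inner_sub_apply_self_eq (hP : IsSymmContractionSemigroup P) {t : ℝ} (ht : 0 ≤ t) (x : H) :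
    ⟪x - P t x, x⟫ = ‖x‖ ^ 2 - ‖P (t / 2) x‖ ^ 2 := by
  rw [← real_inner_self_eq_norm_sq, ← real_inner_self_eq_norm_sq,
    hP.inner_apply_apply (by linarith) (by linarith), add_halves, inner_sub_left]

lemma norm_apply_add_le (hP : IsSymmContractionSemigroup P) {u h : ℝ} (hu : 0 ≤ u) (hh : 0 ≤ h)
    (x : H) : ‖P (u + h) x‖ ≤ ‖P u x‖ := by
  rw [add_comm, hP.map_add h u hh hu]
  exact (P h).le_of_opNorm_le (hP.norm_le_one h hh) _ |>.trans_eq (one_mul _)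

lemma inner_sub_apply_self_mono (hP : IsSymmContractionSemigroup P) {t t' : ℝ} (ht : 0 ≤ t)
    (htt' : t ≤ t') (x : H) : ⟪x - P t x, x⟫ ≤ ⟪x - P t' x, x⟫ := by
  have h := hP.norm_apply_add_le (u := t / 2) (h := (t' - t) / 2) (by linarith) (by linarith) x
  rw [show t / 2 + (t' - t) / 2 = t' / 2 by ring] at h
  rw [hP.inner_sub_apply_self_eq ht, hP.inner_sub_apply_self_eq (ht.trans htt')]
  gcongr

lemma two_mul_norm_sq_le (hP : IsSymmContractionSemigroup P) {u h : ℝ} (hu : 0 ≤ u) (hh : 0 ≤ h)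
    (x : H) : 2 * ‖P (u + h) x‖ ^ 2 ≤ ‖P u x‖ ^ 2 + ‖P (u + 2 * h) x‖ ^ 2 := by
  have hmid : ‖P (u + h) x‖ ^ 2 = ⟪P u x, P (u + 2 * h) x⟫ := by
    rw [← real_inner_self_eq_norm_sq, hP.inner_apply_apply (by linarith) (by linarith),
      hP.inner_apply_apply hu (by linarith)]
    ring_nf
  nlinarith [norm_sub_sq_real (P u x) (P (u + 2 * h) x), sq_nonneg ‖P u x - P (u + 2 * h) x‖]

lemma norm_sq_sub_norm_sq_le (hP : IsSymmContractionSemigroup P) {h : ℝ} (hh : 0 ≤ h) (x : H)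
    (k : ℕ) : ‖P (k * h) x‖ ^ 2 - ‖P ((k + 1) * h) x‖ ^ 2 ≤ ‖x‖ ^ 2 - ‖P h x‖ ^ 2 := by
  induction k with
  | zero => simp [hP.map_zero]
  | succ k ih =>
    have hconv := hP.two_mul_norm_sq_le (u := k * h) (by positivity) hh x
    rw [show (k : ℝ) * h + h = (k + 1) * h by ring,
      show (k : ℝ) * h + 2 * h = (k + 1 + 1) * h by ring] at hconv
    push_cast
    linarith

lemma inner_sub_apply_self_nat_mul_le (hP : IsSymmContractionSemigroup P) (k : ℕ) {s : ℝ}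
    (hs : 0 ≤ s) (x : H) : ⟪x - P (k * s) x, x⟫ ≤ k * ⟪x - P s x, x⟫ := by
  rw [hP.inner_sub_apply_self_eq (by positivity), hP.inner_sub_apply_self_eq hs,
    mul_div_assoc]
  induction k with
  | zero => simp [hP.map_zero]
  | succ k ih =>
    have hstep := hP.norm_sq_sub_norm_sq_le (h := s / 2) (by positivity) x k
    push_cast at ih ⊢
    linarith

lemma inv_mul_inner_sub_apply_self_le (hP : IsSymmContractionSemigroup P) {s t : ℝ}
    (hs : 0 < s) (ht : 0 < t) (x : H) :
    t⁻¹ * ⟪x - P t x, x⟫ ≤ (1 + s / t) * (s⁻¹ * ⟪x - P s x, x⟫) := by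
  have hceil : t ≤ ⌈t / s⌉₊ * s := (div_le_iff₀ hs).1 (Nat.le_ceil _)
  have hbound : ⟪x - P t x, x⟫ ≤ (t / s + 1) * ⟪x - P s x, x⟫ :=
    calc ⟪x - P t x, x⟫ ≤ ⟪x - P (⌈t / s⌉₊ * s) x, x⟫ :=
          hP.inner_sub_apply_self_mono ht.le hceil x
      _ ≤ ⌈t / s⌉₊ * ⟪x - P s x, x⟫ := hP.inner_sub_apply_self_nat_mul_le _ hs.le x
      _ ≤ (t / s + 1) * ⟪x - P s x, x⟫ := by
        gcongr
        · exact inner_sub_apply_self_nonneg (hP.norm_le_one s hs.le) x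
        · exact (Nat.ceil_lt_add_one (by positivity)).le
  calc t⁻¹ * ⟪x - P t x, x⟫ ≤ t⁻¹ * ((t / s + 1) * ⟪x - P s x, x⟫) := by gcongr
    _ = (1 + s / t) * (s⁻¹ * ⟪x - P s x, x⟫) := by field_simp

lemma monotone_two_pow_mul_inner_sub_apply (hP : IsSymmContractionSemigroup P) (x : H) :
    Monotone fun n : ℕ => (2 : ℝ) ^ n * ⟪x - P ((2 : ℝ) ^ (-(n : ℤ))) x, x⟫ := by
  refine monotone_nat_of_le_succ fun n => ?_
  have hhalf : (2 : ℝ) ^ (-(n : ℤ)) = ((2 : ℕ) : ℝ) * 2 ^ (-((n + 1 : ℕ) : ℤ)) := by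
    simp only [zpow_neg, zpow_natCast]
    push_cast
    field_simp
    ring
  have h := hP.inner_sub_apply_self_nat_mul_le 2
    (by positivity : (0 : ℝ) ≤ 2 ^ (-((n + 1 : ℕ) : ℤ))) x
  rw [← hhalf] at h
  calc (2 : ℝ) ^ n * ⟪x - P ((2 : ℝ) ^ (-(n : ℤ))) x, x⟫
      ≤ 2 ^ n * (((2 : ℕ) : ℝ) * ⟪x - P ((2 : ℝ) ^ (-((n + 1 : ℕ) : ℤ))) x, x⟫) := by gcongr
    _ = 2 ^ (n + 1) * ⟪x - P ((2 : ℝ) ^ (-((n + 1 : ℕ) : ℤ))) x, x⟫ := by push_cast; ring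

lemma iSup_inv_mul_inner_sub_apply_eq (hP : IsSymmContractionSemigroup P) (x : H) :
    ⨆ (t : ℝ) (_ : 0 < t), ENNReal.ofReal (t⁻¹ * ⟪x - P t x, x⟫) =
      ⨆ n : ℕ, ENNReal.ofReal ((2 : ℝ) ^ n * ⟪x - P ((2 : ℝ) ^ (-(n : ℤ))) x, x⟫) := by
  refine le_antisymm (iSup₂_le fun t ht => ?_) (iSup_le fun n => ?_)
  · set S := ⨆ n : ℕ, ENNReal.ofReal ((2 : ℝ) ^ n * ⟪x - P ((2 : ℝ) ^ (-(n : ℤ))) x, x⟫)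
    have hsmall : Tendsto (fun n : ℕ => (2 : ℝ) ^ (-(n : ℤ))) atTop (𝓝 0) := by
      simp only [zpow_neg, zpow_natCast]
      exact tendsto_inv_atTop_zero.comp (tendsto_pow_atTop_atTop_of_one_lt one_lt_two)
    have hfactor : Tendsto (fun n : ℕ => ENNReal.ofReal (1 + (2 : ℝ) ^ (-(n : ℤ)) / t) * S)
        atTop (𝓝 (1 * S)) := by
      refine ENNReal.Tendsto.mul_const ?_ (Or.inl one_ne_zero)
      simpa using ENNReal.tendsto_ofReal ((hsmall.div_const t).const_add 1)
    refine ge_of_tendsto' (one_mul S ▸ hfactor) fun n => ?_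
    have hs : (0 : ℝ) < 2 ^ (-(n : ℤ)) := by positivity
    have hbound := hP.inv_mul_inner_sub_apply_self_le hs ht x
    calc ENNReal.ofReal (t⁻¹ * ⟪x - P t x, x⟫)
        ≤ ENNReal.ofReal ((1 + 2 ^ (-(n : ℤ)) / t) *
            ((2 : ℝ) ^ n * ⟪x - P ((2 : ℝ) ^ (-(n : ℤ))) x, x⟫)) := by
          refine ENNReal.ofReal_le_ofReal ?_
          simpa only [zpow_neg, zpow_natCast, inv_inv] using hbound
      _ ≤ ENNReal.ofReal (1 + (2 : ℝ) ^ (-(n : ℤ)) / t) * S := by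
          rw [ENNReal.ofReal_mul (by positivity)]
          gcongr
          exact le_iSup (fun n : ℕ =>
            ENNReal.ofReal ((2 : ℝ) ^ n * ⟪x - P ((2 : ℝ) ^ (-(n : ℤ))) x, x⟫)) n
  · refine le_iSup₂_of_le ((2 : ℝ) ^ (-(n : ℤ))) (by positivity) (le_of_eq ?_)
    rw [zpow_neg, inv_inv, zpow_natCast]

end IsSymmContractionSemigroup

end

theorem stmt9_general {H : Type*} [NormedAddCommGroup H] [InnerProductSpace ℝ H]
    (P : ℝ → H →L[ℝ] H)
    (hP0 : P 0 = ContinuousLinearMap.id ℝ H)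
    (hsemi : ∀ s t : ℝ, 0 ≤ s → 0 ≤ t → P (s + t) = (P s).comp (P t))
    (hsym : ∀ t : ℝ, 0 ≤ t → ∀ u v : H, ⟪P t u, v⟫ = ⟪u, P t v⟫)
    (hcontr : ∀ t : ℝ, 0 ≤ t → ‖P t‖ ≤ 1) :
    let En : ℕ → H → ℝ≥0∞ := fun n g =>
      ENNReal.ofReal ((2 : ℝ) ^ n * ⟪g - P ((2 : ℝ) ^ (-(n : ℤ))) g, g⟫)
    let E : H → ℝ≥0∞ := fun g =>
      ⨆ (t : ℝ) (_ : 0 < t), ENNReal.ofReal (t⁻¹ * ⟪g - P t g, g⟫)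
    (∀ (f : ℕ → H) (g : H),
      (∀ y : H, Tendsto (fun n => ⟪f n, y⟫) atTop (nhds ⟪g, y⟫)) →
      E g ≤ liminf (fun n => En n (f n)) atTop) ∧
    (∀ g : H, ∃ f : ℕ → H, Tendsto f atTop (nhds g) ∧
      limsup (fun n => En n (f n)) atTop ≤ E g) := by
  intro En E
  have hP : IsSymmContractionSemigroup P := ⟨hP0, hsemi, hsym, hcontr⟩
  have hE : ∀ g, E g = ⨆ n, En n g := hP.iSup_inv_mul_inner_sub_apply_eq
  refine ⟨fun f g hfg => ?_, fun g => ⟨fun _ => g, tendsto_const_nhds, ?_⟩⟩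
  · rw [hE]
    refine iSup_le fun m => ?_
    calc En m g ≤ liminf (fun n => En m (f n)) atTop :=
          ofReal_mul_inner_sub_apply_self_le_liminf (hcontr _ (by positivity))
            (hsym _ (by positivity)) (by positivity) hfg
      _ ≤ liminf (fun n => En n (f n)) atTop :=
          liminf_le_liminf (eventually_atTop.2 ⟨m, fun n hmn =>
            ENNReal.ofReal_le_ofReal (hP.monotone_two_pow_mul_inner_sub_apply (f n) hmn)⟩)
  · exact limsup_le_of_le (by isBoundedDefault)
      (Eventually.of_forall fun n => (hE g).symm ▸ le_iSup (fun n => En n g) n)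

/-- The bounded forms `E⁽ⁿ⁾(f) = 2ⁿ⟨f − P_{2⁻ⁿ} f, f⟩` converge to the closed
form `E` of the generator in the sense of Mosco. -/
theorem stmt9 {H : Type*} [NormedAddCommGroup H] [InnerProductSpace ℝ H]
    [CompleteSpace H] [TopologicalSpace.SeparableSpace H]
    (P : ℝ → H →L[ℝ] H)
    (hP0 : P 0 = ContinuousLinearMap.id ℝ H)
    (hsemi : ∀ s t : ℝ, 0 ≤ s → 0 ≤ t → P (s + t) = (P s).comp (P t))
    (hsym : ∀ t : ℝ, 0 ≤ t → ∀ u v : H, ⟪P t u, v⟫ = ⟪u, P t v⟫)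
    (hcontr : ∀ t : ℝ, 0 ≤ t → ‖P t‖ ≤ 1)
    (hcont : ∀ f : H, ContinuousOn (fun t => P t f) (Set.Ici (0 : ℝ))) :
    let En : ℕ → H → ℝ≥0∞ := fun n g =>
      ENNReal.ofReal ((2 : ℝ) ^ n * ⟪g - P ((2 : ℝ) ^ (-(n : ℤ))) g, g⟫)
    let E : H → ℝ≥0∞ := fun g =>
      ⨆ (t : ℝ) (_ : 0 < t), ENNReal.ofReal (t⁻¹ * ⟪g - P t g, g⟫)
    (∀ (f : ℕ → H) (g : H),
      (∀ y : H, Tendsto (fun n => ⟪f n, y⟫) atTop (nhds ⟪g, y⟫)) →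
      E g ≤ liminf (fun n => En n (f n)) atTop) ∧
    (∀ g : H, ∃ f : ℕ → H, Tendsto f atTop (nhds g) ∧
      limsup (fun n => En n (f n)) atTop ≤ E g) :=
  stmt9_general P hP0 hsemi hsym hcontr
end

section
/- Let E be a bounded nonnegative quadratic form on a separable Hilbert space H and (π_m) the orthogonal projections onto the spans of the first m elements of a complete orthonormal system. Then the forms E^{(m)}(f) := E(π_m f) converge to E in the sense of Mosco as m → ∞. -/
open scoped ENNReal RealInnerProductSpace BigOperators
open Filter

/-- A bounded nonnegative quadratic form on a separable Hilbert space is the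
Mosco limit of its Galerkin approximations along a complete orthonormal system. -/
theorem stmt10 {H : Type*} [NormedAddCommGroup H] [InnerProductSpace ℝ H] [CompleteSpace H]
    (A : H →L[ℝ] H)
    (hsa : ∀ f g : H, ⟪A f, g⟫ = ⟪f, A g⟫)
    (hpos : ∀ f : H, 0 ≤ ⟪A f, f⟫)
    (φ : ℕ → H) (hortho : Orthonormal ℝ φ)
    (htotal : (Submodule.span ℝ (Set.range φ)).topologicalClosure = ⊤) :
    let π : ℕ → H → H := fun m f => ∑ i ∈ Finset.range m, ⟪φ i, f⟫ • φ i
    let Em : ℕ → H → ℝ≥0∞ := fun m f => ENNReal.ofReal ⟪A (π m f), π m f⟫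
    let E : H → ℝ≥0∞ := fun f => ENNReal.ofReal ⟪A f, f⟫
    (∀ (f : ℕ → H) (g : H),
      (∀ y : H, Tendsto (fun m => ⟪f m, y⟫) atTop (nhds ⟪g, y⟫)) →
      E g ≤ liminf (fun m => Em m (f m)) atTop) ∧
    (∀ g : H, ∃ f : ℕ → H, Tendsto f atTop (nhds g) ∧
      limsup (fun m => Em m (f m)) atTop ≤ E g) := by
  intro π Em E
  have hπ : ∀ g : H, Tendsto (fun m => π m g) atTop (nhds g) := by
    intro g
    set b := HilbertBasis.mk hortho htotal.ge with hbdef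
    have hcoe : ⇑b = φ := HilbertBasis.coe_mk hortho htotal.ge
    have h1 := (b.hasSum_repr g).tendsto_sum_nat
    refine h1.congr fun n => Finset.sum_congr rfl fun i _ => ?_
    rw [HilbertBasis.repr_apply_apply, hcoe]
  -- self-adjointness of π m
  have hπadj : ∀ m (x y : H), ⟪π m x, y⟫ = ⟪x, π m y⟫ := by
    intro m x y
    simp only [π, sum_inner, inner_sum, real_inner_smul_left, real_inner_smul_right]
    refine Finset.sum_congr rfl fun i _ => ?_
    rw [real_inner_comm x (φ i)]
    ring
  constructor
  · intro f g hweak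
    set u : ℕ → H := fun m => π m (f m) with hu
    -- boundedness of f
    obtain ⟨C, hC⟩ : ∃ C, ∀ m, ‖f m‖ ≤ C := by
      have h : ∀ y : H, ∃ c, ∀ m, ‖(innerSL ℝ (f m)) y‖ ≤ c := by
        intro y
        have : Tendsto (fun m => ‖⟪f m, y⟫‖) atTop (nhds ‖⟪g, y⟫‖) :=
          ((hweak y).norm)
        obtain ⟨c, hc⟩ := this.bddAbove_range
        exact ⟨c, fun m => hc (Set.mem_range_self m)⟩
      obtain ⟨C, hC⟩ := banach_steinhaus h
      exact ⟨C, fun m => by simpa [innerSL_apply_norm] using hC m⟩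
    -- weak convergence of u
    have huweak : ∀ y : H, Tendsto (fun m => ⟪u m, y⟫) atTop (nhds ⟪g, y⟫) := by
      intro y
      have hdiff : Tendsto (fun m => ⟪u m, y⟫ - ⟪f m, y⟫) atTop (nhds 0) := by
        have hsq : Tendsto (fun m => C * ‖π m y - y‖) atTop (nhds 0) := by
          have h := (((hπ y).sub_const y).norm.const_mul C)
          simpa using h
        refine squeeze_zero_norm (fun m => ?_) hsq
        have : ⟪u m, y⟫ - ⟪f m, y⟫ = ⟪f m, π m y - y⟫ := by
          rw [hu]; simp only [hπadj m (f m) y, inner_sub_right]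
        rw [this]
        calc ‖⟪f m, π m y - y⟫‖ ≤ ‖f m‖ * ‖π m y - y‖ := norm_inner_le_norm _ _
          _ ≤ C * ‖π m y - y‖ := by
              gcongr
              exact hC m
      have := hdiff.add (hweak y)
      simpa using this
    -- lower semicontinuity
    have hkey : ∀ m, ENNReal.ofReal (2 * ⟪A g, u m⟫ - ⟪A g, g⟫) ≤ Em m (f m) := by
      intro m
      apply ENNReal.ofReal_le_ofReal
      have h0 := hpos (u m - g)
      have hAug : ⟪A (u m), g⟫ = ⟪A g, u m⟫ := by
        rw [hsa, real_inner_comm]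
      simp only [map_sub, inner_sub_left, inner_sub_right] at h0
      show 2 * ⟪A g, u m⟫ - ⟪A g, g⟫ ≤ ⟪A (u m), u m⟫
      nlinarith [h0, hAug]
    have htend : Tendsto (fun m => ENNReal.ofReal (2 * ⟪A g, u m⟫ - ⟪A g, g⟫)) atTop
        (nhds (ENNReal.ofReal ⟪A g, g⟫)) := by
      have h1 : Tendsto (fun m => 2 * ⟪A g, u m⟫ - ⟪A g, g⟫) atTop (nhds ⟪A g, g⟫) := by
        have h2 : Tendsto (fun m => ⟪A g, u m⟫) atTop (nhds ⟪A g, g⟫) := by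
          have := huweak (A g)
          simp only [real_inner_comm] at this ⊢
          exact this
        have := (h2.const_mul 2).sub_const ⟪A g, g⟫
        simpa [two_mul] using this
      exact (ENNReal.continuous_ofReal.tendsto _).comp h1
    calc E g = liminf (fun m => ENNReal.ofReal (2 * ⟪A g, u m⟫ - ⟪A g, g⟫)) atTop :=
          (htend.liminf_eq).symm
      _ ≤ liminf (fun m => Em m (f m)) atTop :=
          liminf_le_liminf (Eventually.of_forall hkey)
  · intro g
    refine ⟨fun _ => g, tendsto_const_nhds, ?_⟩
    have h1 : Tendsto (fun m => Em m g) atTop (nhds (E g)) := by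
      have h2 : Tendsto (fun m => (⟪A (π m g), π m g⟫ : ℝ)) atTop (nhds ⟪A g, g⟫) := by
        have hc : Continuous fun x : H => ⟪A x, x⟫ :=
          Continuous.inner (A.continuous.comp continuous_id) continuous_id
        exact (hc.tendsto g).comp (hπ g)
      exact (ENNReal.continuous_ofReal.tendsto _).comp h2
    exact h1.limsup_eq.le
end

section
/- Let (X,𝒳,μ) be a σ-finite measure space with countably generated 𝒳, (φ_i) an orthonormal basis of L²(X,μ), π_m the projection onto lin(φ₁,...,φ_m), X_l ∈ 𝒳 with μ(X_l) < ∞, and π_{m,l,k} the conditional-expectation-type projection defined by averaging π_m(f)·𝟏_{X_l} over the cells of the finite partition P_{m,k} generated by dyadic level sets {j·2^{−k} < φ_i ≤ (j+1)·2^{−k}}, |j| ≤ 2^{2k}, of φ₁,...,φ_m (together with the tail sets {φ_i ≤ −2^k} and {φ_i > 2^k}). Then for every f ∈ L²(X,μ), lim_{k→∞} π_{m,l,k}(f) = π_m(f)·𝟏_{X_l} in L²(X,μ). -/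
/-!
On a cell `A` of the partition, `π_{m,l,k} f - π_m(f)·𝟏_{X_l}` is the deviation of `g = π_m f`
from its average over `A ∩ X_l`, so the squared `L²` error is the sum over the cells of
`∫_{A ∩ X_l} |⨍ g - g|²`. On a cell that avoids the tail sets every `φ_i` varies by at most
`2⁻ᵏ`, hence `g` varies by at most `C 2⁻ᵏ` with `C = ∑ |⟨f, φ_i⟩|`, and these cells contribute at
most `C² 4⁻ᵏ μ(X_l)`. A tail cell lies in `{2ᵏ ≤ ∑ |φ_i|}`, and by Jensen it contributes at most
`4 ∫_A |g|²`; so the tail cells contribute at most `4 ∫_{2ᵏ ≤ ∑ |φ_i|} |g|²`, which tends to `0`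
by dominated convergence since `g ∈ L²`.
-/

open MeasureTheory Filter Set
open scoped ENNReal Topology

section DyadicBin

noncomputable def dyadicBin (k : ℕ) (j : ℤ) : Set ℝ :=
  if j = 2 ^ (2 * k) then Ioi (2 ^ k)
  else if j = -(2 ^ (2 * k)) - 1 then Iic (-(2 ^ k))
  else Ioc (j / 2 ^ k) ((j + 1) / 2 ^ k)

noncomputable def dyadicRange (k : ℕ) : Finset ℤ := Finset.Icc (-(2 ^ (2 * k)) - 1) (2 ^ (2 * k))

noncomputable def dyadicIndex (k : ℕ) (r : ℝ) : ℤ :=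
  if 2 ^ k < r then 2 ^ (2 * k) else if r ≤ -(2 ^ k) then -(2 ^ (2 * k)) - 1 else ⌈r * 2 ^ k⌉ - 1

theorem measurableSet_dyadicBin (k : ℕ) (j : ℤ) : MeasurableSet (dyadicBin k j) := by
  unfold dyadicBin
  split_ifs
  exacts [measurableSet_Ioi, measurableSet_Iic, measurableSet_Ioc]

theorem dyadicBin_tail_or_abs_sub_le (k : ℕ) (j : ℤ) :
    (∀ r ∈ dyadicBin k j, 2 ^ k ≤ |r|) ∨
      ∀ r ∈ dyadicBin k j, ∀ s ∈ dyadicBin k j, |r - s| ≤ (2 ^ k)⁻¹ := by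
  unfold dyadicBin
  split_ifs
  · exact .inl fun r hr => hr.out.le.trans (le_abs_self r)
  · exact .inl fun r hr => (le_neg.1 hr.out).trans (neg_le_abs r)
  · refine .inr fun r ⟨hr₁, hr₂⟩ s ⟨hs₁, hs₂⟩ => abs_sub_le_iff.2 ⟨?_, ?_⟩ <;>
      · rw [add_div, div_eq_mul_inv (1 : ℝ), one_mul] at hr₂ hs₂
        linarith

theorem two_pow_two_mul_eq (k : ℕ) : (2 : ℝ) ^ (2 * k) = 2 ^ k * 2 ^ k := by
  rw [two_mul, pow_add]

theorem mem_dyadicBin_of_ceil_eq {k : ℕ} {j : ℤ} {r : ℝ} (hr₁ : -(2 ^ k) < r) (hr₂ : r ≤ 2 ^ k)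
    (hj : ⌈r * 2 ^ k⌉ = j + 1) :
    -(2 ^ (2 * k)) ≤ j ∧ j < 2 ^ (2 * k) ∧ r ∈ Ioc ((j : ℝ) / 2 ^ k) ((j + 1) / 2 ^ k) := by
  have hpos : (0 : ℝ) < 2 ^ k := by positivity
  obtain ⟨hlo, hhi⟩ := Int.ceil_eq_iff.1 hj
  push_cast at hlo hhi
  have ht₁ : -(2 ^ (2 * k) : ℝ) < r * 2 ^ k := by rw [two_pow_two_mul_eq]; nlinarith
  have ht₂ : r * 2 ^ k ≤ (2 ^ (2 * k) : ℝ) := by rw [two_pow_two_mul_eq]; nlinarith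
  refine ⟨?_, ?_, (div_lt_iff₀ hpos).2 (by linarith), (le_div_iff₀ hpos).2 hhi⟩
  · have : (-(2 ^ (2 * k)) : ℝ) < j + 1 := by linarith
    exact_mod_cast Int.lt_add_one_iff.1 (by exact_mod_cast this)
  · exact_mod_cast (by linarith : (j : ℝ) < 2 ^ (2 * k))

theorem dyadicIndex_mem_dyadicRange (k : ℕ) (r : ℝ) : dyadicIndex k r ∈ dyadicRange k := by
  have hN : (0 : ℤ) < 2 ^ (2 * k) := by positivity
  rw [dyadicRange, Finset.mem_Icc, dyadicIndex]
  split_ifs with h₁ h₂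
  · omega
  · omega
  · have := mem_dyadicBin_of_ceil_eq (not_le.1 h₂) (not_lt.1 h₁) (sub_add_cancel _ 1).symm
    omega

theorem mem_dyadicBin_dyadicIndex (k : ℕ) (r : ℝ) : r ∈ dyadicBin k (dyadicIndex k r) := by
  have hN : (0 : ℤ) < 2 ^ (2 * k) := by positivity
  unfold dyadicIndex
  split_ifs with h₁ h₂
  · simpa [dyadicBin] using h₁
  · simpa [dyadicBin, show -(2 : ℤ) ^ (2 * k) - 1 ≠ 2 ^ (2 * k) by omega] using h₂
  · obtain ⟨hlo, hhi, hr⟩ :=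
      mem_dyadicBin_of_ceil_eq (not_le.1 h₂) (not_lt.1 h₁) (sub_add_cancel _ 1).symm
    rw [dyadicBin, if_neg hhi.ne, if_neg (by omega)]
    exact_mod_cast hr

theorem dyadicIndex_eq_of_mem_dyadicBin {k : ℕ} {j : ℤ} (hj : j ∈ dyadicRange k) {r : ℝ}
    (hr : r ∈ dyadicBin k j) : dyadicIndex k r = j := by
  have hpos : (0 : ℝ) < 2 ^ k := by positivity
  rw [dyadicRange, Finset.mem_Icc] at hj
  unfold dyadicBin at hr
  split_ifs at hr with h₁ h₂
  · rw [dyadicIndex, if_pos hr.out, h₁]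
  · rw [dyadicIndex, if_neg (by linarith [hr.out]), if_pos hr.out, h₂]
  · obtain ⟨hlo, hhi⟩ := hr
    have hj₁ : -(2 ^ (2 * k)) ≤ j := by omega
    have hj₂ : j + 1 ≤ 2 ^ (2 * k) := by omega
    have ht₁ : (j : ℝ) < r * 2 ^ k := (div_lt_iff₀ hpos).1 hlo
    have ht₂ : r * 2 ^ k ≤ j + 1 := (le_div_iff₀ hpos).1 hhi
    have hj₁' : -(2 ^ k * 2 ^ k : ℝ) ≤ j := by rw [← two_pow_two_mul_eq]; exact_mod_cast hj₁
    have hj₂' : (j : ℝ) + 1 ≤ 2 ^ k * 2 ^ k := by rw [← two_pow_two_mul_eq]; exact_mod_cast hj₂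
    have hceil : ⌈r * 2 ^ k⌉ = j + 1 :=
      Int.ceil_eq_iff.2 ⟨by push_cast; linarith, by push_cast; linarith⟩
    rw [dyadicIndex, if_neg (by nlinarith), if_neg (by nlinarith), hceil, add_sub_cancel_right]

end DyadicBin

section DyadicCell

variable {X ι : Type*} [Fintype ι]

def dyadicCell (ψ : ι → X → ℝ) (k : ℕ) (j : ι → ℤ) : Set X := ⋂ i, ψ i ⁻¹' dyadicBin k (j i)

theorem measurableSet_dyadicCell [MeasurableSpace X] {ψ : ι → X → ℝ} (hψ : ∀ i, Measurable (ψ i))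
    (k : ℕ) (j : ι → ℤ) : MeasurableSet (dyadicCell ψ k j) :=
  .iInter fun i => hψ i (measurableSet_dyadicBin k (j i))

variable (ψ : ι → X → ℝ) (k : ℕ)

theorem dyadicCell_subset_tail_or_abs_sub_le (j : ι → ℤ) :
    dyadicCell ψ k j ⊆ {x | 2 ^ k ≤ ∑ i, |ψ i x|} ∨
      ∀ x ∈ dyadicCell ψ k j, ∀ y ∈ dyadicCell ψ k j, ∀ i, |ψ i x - ψ i y| ≤ (2 ^ k)⁻¹ := by
  by_cases htail : ∃ i, ∀ r ∈ dyadicBin k (j i), 2 ^ k ≤ |r|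
  · obtain ⟨i, hi⟩ := htail
    exact .inl fun x hx => (hi _ (mem_iInter.1 hx i)).trans
      (Finset.single_le_sum (fun i _ => abs_nonneg (ψ i x)) (Finset.mem_univ i))
  · exact .inr fun x hx y hy i => ((dyadicBin_tail_or_abs_sub_le k (j i)).resolve_left
      (not_exists.1 htail i)) _ (mem_iInter.1 hx i) _ (mem_iInter.1 hy i)

variable [DecidableEq ι]

theorem pairwiseDisjoint_dyadicCell :
    (Fintype.piFinset fun _ : ι => dyadicRange k : Set (ι → ℤ)).PairwiseDisjoint
      (dyadicCell ψ k) := by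
  intro j hj j' hj' hne
  refine disjoint_left.2 fun x hx hx' => hne (funext fun i => ?_)
  rw [Finset.mem_coe, Fintype.mem_piFinset] at hj hj'
  rw [← dyadicIndex_eq_of_mem_dyadicBin (hj i) (mem_iInter.1 hx i),
    dyadicIndex_eq_of_mem_dyadicBin (hj' i) (mem_iInter.1 hx' i)]

theorem iUnion_dyadicCell :
    ⋃ j ∈ Fintype.piFinset (fun _ : ι => dyadicRange k), dyadicCell ψ k j = univ :=
  eq_univ_of_forall fun x => mem_iUnion₂.2
    ⟨fun i => dyadicIndex k (ψ i x),
      Fintype.mem_piFinset.2 fun _ => dyadicIndex_mem_dyadicRange k _,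
      mem_iInter.2 fun _ => mem_dyadicBin_dyadicIndex k _⟩

end DyadicCell

theorem abs_sum_mul_sub_sum_mul_le {ι : Type*} (s : Finset ι) (c : ι → ℝ) {u v : ι → ℝ} {ε : ℝ}
    (h : ∀ i ∈ s, |u i - v i| ≤ ε) :
    |∑ i ∈ s, c i * u i - ∑ i ∈ s, c i * v i| ≤ (∑ i ∈ s, |c i|) * ε := by
  rw [← Finset.sum_sub_distrib, Finset.sum_mul]
  refine (Finset.abs_sum_le_sum_abs _ _).trans (Finset.sum_le_sum fun i hi => ?_)
  rw [← mul_sub, abs_mul]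
  exact mul_le_mul_of_nonneg_left (h i hi) (abs_nonneg _)

theorem sum_indicator_apply_of_mem {X ι M : Type*} [AddCommMonoid M] {s : Finset ι}
    {S : ι → Set X} (hd : (s : Set ι).PairwiseDisjoint S) (f : ι → X → M) {j : ι} (hj : j ∈ s)
    {x : X} (hx : x ∈ S j) :
    ∑ i ∈ s, (S i).indicator (f i) x = f j x := by
  rw [Finset.sum_eq_single_of_mem j hj fun i hi hij =>
    indicator_of_notMem (fun hxi => disjoint_left.1 (hd hi hj hij) hxi hx) _, indicator_of_mem hx]

theorem enorm_sub_sq_le {E : Type*} [SeminormedAddCommGroup E] (a b : E) :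
    ‖a - b‖ₑ ^ 2 ≤ 2 * (‖a‖ₑ ^ 2 + ‖b‖ₑ ^ 2) :=
  (pow_le_pow_left₀ zero_le enorm_sub_le 2).trans <| by
    simpa only [← enorm_eq_nnnorm, ENNReal.coe_pow, ENNReal.coe_mul, ENNReal.coe_add,
      ENNReal.coe_ofNat] using ENNReal.coe_le_coe.2 (add_sq_le (a := ‖a‖₊) (b := ‖b‖₊))

section SetAverage

variable {X : Type*} [MeasurableSpace X] {μ : Measure X} {S : Set X} {g : X → ℝ}

theorem sq_enorm_setAverage_mul_le (hS : μ S ≠ ∞) (hg : MemLp g 2 (μ.restrict S)) :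
    ‖⨍ x in S, g x ∂μ‖ₑ ^ 2 * μ S ≤ ∫⁻ x in S, ‖g x‖ₑ ^ 2 ∂μ := by
  rcases eq_or_ne (μ S) 0 with h0 | h0
  · simp [h0]
  have : IsFiniteMeasure (μ.restrict S) := isFiniteMeasure_restrict.2 hS
  have jensen : (⨍ x in S, g x ∂μ) ^ 2 ≤ ⨍ x in S, g x ^ 2 ∂μ :=
    (even_two.convexOn_pow (𝕜 := ℝ)).map_set_average_le (continuous_pow 2).continuousOn
      isClosed_univ h0 hS (ae_of_all _ fun _ => mem_univ _) (hg.integrable one_le_two)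
      hg.integrable_sq
  have hpos : 0 < μ.real S := ENNReal.toReal_pos h0 hS
  rw [setAverage_eq μ (fun x => g x ^ 2), smul_eq_mul, le_inv_mul_iff₀ hpos] at jensen
  have hsq (r : ℝ) : ‖r‖ₑ ^ 2 = ENNReal.ofReal (r ^ 2) := by
    rw [Real.enorm_eq_ofReal_abs, ← ENNReal.ofReal_pow (abs_nonneg _), sq_abs]
  calc ‖⨍ x in S, g x ∂μ‖ₑ ^ 2 * μ S
      = ENNReal.ofReal (μ.real S * (⨍ x in S, g x ∂μ) ^ 2) := by
        rw [hsq, mul_comm, ENNReal.ofReal_mul measureReal_nonneg, ofReal_measureReal hS]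
    _ ≤ ENNReal.ofReal (∫ x in S, g x ^ 2 ∂μ) := ENNReal.ofReal_le_ofReal jensen
    _ = ∫⁻ x in S, ‖g x‖ₑ ^ 2 ∂μ := by
        rw [ofReal_integral_eq_lintegral_ofReal hg.integrable_sq (ae_of_all _ fun _ => sq_nonneg _)]
        simp_rw [hsq]

theorem setLIntegral_sq_enorm_setAverage_sub_le (hS : μ S ≠ ∞) (hg : MemLp g 2 (μ.restrict S)) :
    ∫⁻ x in S, ‖⨍ y in S, g y ∂μ - g x‖ₑ ^ 2 ∂μ ≤ 4 * ∫⁻ x in S, ‖g x‖ₑ ^ 2 ∂μ := by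
  set c := ⨍ y in S, g y ∂μ
  calc ∫⁻ x in S, ‖c - g x‖ₑ ^ 2 ∂μ
      ≤ ∫⁻ x in S, 2 * (‖c‖ₑ ^ 2 + ‖g x‖ₑ ^ 2) ∂μ :=
        lintegral_mono fun x => enorm_sub_sq_le c (g x)
    _ = 2 * (‖c‖ₑ ^ 2 * μ S + ∫⁻ x in S, ‖g x‖ₑ ^ 2 ∂μ) := by
        rw [lintegral_const_mul' _ _ ENNReal.ofNat_ne_top, lintegral_add_left measurable_const,
          setLIntegral_const]
    _ ≤ 2 * (∫⁻ x in S, ‖g x‖ₑ ^ 2 ∂μ + ∫⁻ x in S, ‖g x‖ₑ ^ 2 ∂μ) := by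
        gcongr; exact sq_enorm_setAverage_mul_le hS hg
    _ = 4 * ∫⁻ x in S, ‖g x‖ₑ ^ 2 ∂μ := by ring

theorem abs_setAverage_sub_le (hSm : MeasurableSet S) (h0 : μ S ≠ 0) (hS : μ S ≠ ∞)
    (hg : IntegrableOn g S μ) {ε : ℝ} (hε : ∀ x ∈ S, ∀ y ∈ S, |g x - g y| ≤ ε) {x : X}
    (hx : x ∈ S) : |⨍ y in S, g y ∂μ - g x| ≤ ε := by
  have := (convex_closedBall (g x) ε).set_average_mem Metric.isClosed_closedBall h0 hS
    ((ae_restrict_mem hSm).mono fun y hy => Metric.mem_closedBall.2 (hε y hy x hx)) hg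
  exact Metric.mem_closedBall.1 this

theorem setLIntegral_sq_enorm_setAverage_sub_le_of_subset_or_abs_sub_le (hSm : MeasurableSet S)
    (hS : μ S ≠ ∞) (hg : MemLp g 2 μ) (T : Set X) {ε : ℝ}
    (h : S ⊆ T ∨ ∀ x ∈ S, ∀ y ∈ S, |g x - g y| ≤ ε) :
    ∫⁻ x in S, ‖⨍ y in S, g y ∂μ - g x‖ₑ ^ 2 ∂μ ≤
      ∫⁻ x in S, (ENNReal.ofReal ε ^ 2 + 4 * T.indicator (fun x => ‖g x‖ₑ ^ 2) x) ∂μ := by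
  rcases h with hT | hε
  · calc ∫⁻ x in S, ‖⨍ y in S, g y ∂μ - g x‖ₑ ^ 2 ∂μ
        ≤ 4 * ∫⁻ x in S, ‖g x‖ₑ ^ 2 ∂μ := setLIntegral_sq_enorm_setAverage_sub_le hS (hg.restrict S)
      _ = ∫⁻ x in S, 4 * T.indicator (fun x => ‖g x‖ₑ ^ 2) x ∂μ := by
          rw [lintegral_const_mul' _ _ ENNReal.ofNat_ne_top]
          exact congrArg _ (setLIntegral_congr_fun hSm fun x hx =>
            (indicator_of_mem (hT hx) (fun x => ‖g x‖ₑ ^ 2)).symm)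
      _ ≤ _ := lintegral_mono fun x => le_add_self
  rcases eq_or_ne (μ S) 0 with h0 | h0
  · simp [Measure.restrict_eq_zero.2 h0]
  refine setLIntegral_mono' hSm fun x hx => le_add_right ?_
  rw [Real.enorm_eq_ofReal_abs]
  gcongr
  have : IsFiniteMeasure (μ.restrict S) := isFiniteMeasure_restrict.2 hS
  exact abs_setAverage_sub_le hSm h0 hS ((hg.restrict S).integrable one_le_two) hε hx

end SetAverage

section PiecewiseAverage

variable {X ι : Type*} [MeasurableSpace X] {μ : Measure X} {s : Finset ι} {S : ι → Set X}
  {g : X → ℝ}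

theorem lintegral_sq_enorm_sum_indicator_sub_indicator (hSm : ∀ j ∈ s, MeasurableSet (S j))
    (hd : (s : Set ι).PairwiseDisjoint S) (c : ι → ℝ) :
    ∫⁻ x, ‖∑ j ∈ s, (S j).indicator (fun _ => c j) x - (⋃ j ∈ s, S j).indicator g x‖ₑ ^ 2 ∂μ =
      ∑ j ∈ s, ∫⁻ x in S j, ‖c j - g x‖ₑ ^ 2 ∂μ := by
  set F := fun x => ‖∑ j ∈ s, (S j).indicator (fun _ => c j) x - (⋃ j ∈ s, S j).indicator g x‖ₑ ^ 2
  have hsupp : F.support ⊆ ⋃ j ∈ s, S j := fun x hx => by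
    by_contra hU
    refine hx ?_
    simp only [F, indicator_of_notMem hU, Finset.sum_eq_zero fun j hj =>
      indicator_of_notMem (fun hxj => hU (mem_iUnion₂.2 ⟨j, hj, hxj⟩)) _]
    simp
  rw [← setLIntegral_eq_of_support_subset hsupp, lintegral_biUnion_finset hd hSm]
  refine Finset.sum_congr rfl fun j hj => setLIntegral_congr_fun (hSm j hj) fun x hx => ?_
  have hxU : x ∈ ⋃ j ∈ s, S j := mem_iUnion₂.2 ⟨j, hj, hx⟩
  simp only [F, sum_indicator_apply_of_mem hd _ hj hx, indicator_of_mem hxU]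

theorem lintegral_sq_enorm_sum_indicator_setAverage_sub_le (hSm : ∀ j ∈ s, MeasurableSet (S j))
    (hd : (s : Set ι).PairwiseDisjoint S) (hS : ∀ j ∈ s, μ (S j) ≠ ∞) (hg : MemLp g 2 μ)
    (T : Set X) {ε : ℝ} (h : ∀ j ∈ s, S j ⊆ T ∨ ∀ x ∈ S j, ∀ y ∈ S j, |g x - g y| ≤ ε) :
    ∫⁻ x, ‖∑ j ∈ s, (S j).indicator (fun _ => ⨍ y in S j, g y ∂μ) x -
        (⋃ j ∈ s, S j).indicator g x‖ₑ ^ 2 ∂μ ≤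
      ENNReal.ofReal ε ^ 2 * μ (⋃ j ∈ s, S j) + 4 * ∫⁻ x in T, ‖g x‖ₑ ^ 2 ∂μ := by
  rw [lintegral_sq_enorm_sum_indicator_sub_indicator hSm hd]
  calc ∑ j ∈ s, ∫⁻ x in S j, ‖⨍ y in S j, g y ∂μ - g x‖ₑ ^ 2 ∂μ
      ≤ ∑ j ∈ s, ∫⁻ x in S j,
          (ENNReal.ofReal ε ^ 2 + 4 * T.indicator (fun x => ‖g x‖ₑ ^ 2) x) ∂μ :=
        Finset.sum_le_sum fun j hj =>
          setLIntegral_sq_enorm_setAverage_sub_le_of_subset_or_abs_sub_le (hSm j hj) (hS j hj) hg T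
            (h j hj)
    _ = ENNReal.ofReal ε ^ 2 * μ (⋃ j ∈ s, S j) +
          4 * ∫⁻ x in ⋃ j ∈ s, S j, T.indicator (fun x => ‖g x‖ₑ ^ 2) x ∂μ := by
        rw [← lintegral_biUnion_finset hd hSm, lintegral_add_left measurable_const,
          setLIntegral_const, lintegral_const_mul' _ _ ENNReal.ofNat_ne_top]
    _ ≤ ENNReal.ofReal ε ^ 2 * μ (⋃ j ∈ s, S j) + 4 * ∫⁻ x in T, ‖g x‖ₑ ^ 2 ∂μ := by
        gcongr _ + 4 * ?_
        exact (setLIntegral_le_lintegral _ _).trans (lintegral_indicator_le _ _)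

end PiecewiseAverage

theorem tendsto_setLIntegral_setOf_le_zero {X : Type*} [MeasurableSpace X] {μ : Measure X}
    {f : X → ℝ≥0∞} (hf : AEMeasurable f μ) (hfi : ∫⁻ x, f x ∂μ ≠ ∞) {M : X → ℝ}
    (hM : Measurable M) {t : ℕ → ℝ} (ht : Tendsto t atTop atTop) :
    Tendsto (fun k => ∫⁻ x in {x | t k ≤ M x}, f x ∂μ) atTop (𝓝 0) := by
  have hmeas k : MeasurableSet {x | t k ≤ M x} := measurableSet_le measurable_const hM
  simp_rw [← lintegral_indicator (hmeas _)]
  have hlim : ∀ x, Tendsto (fun k => {x | t k ≤ M x}.indicator f x) atTop (𝓝 0) := fun x =>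
    tendsto_const_nhds.congr' <| (ht.eventually_gt_atTop (M x)).mono fun k hk =>
      (Set.indicator_of_notMem (s := {x | t k ≤ M x}) (not_le.2 hk) f).symm
  simpa using tendsto_lintegral_of_dominated_convergence' f (fun k => hf.indicator (hmeas k))
    (fun k => ae_of_all _ (Set.indicator_le_self _ f)) hfi (ae_of_all _ hlim)

theorem tendsto_eLpNorm_two_zero_of_lintegral {X E ι : Type*} [MeasurableSpace X] {μ : Measure X}
    [NormedAddCommGroup E] {l : Filter ι} {F : ι → X → E}
    (h : Tendsto (fun i => ∫⁻ x, ‖F i x‖ₑ ^ 2 ∂μ) l (𝓝 0)) :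
    Tendsto (fun i => eLpNorm (F i) 2 μ) l (𝓝 0) := by
  have hF i : eLpNorm (F i) 2 μ = (∫⁻ x, ‖F i x‖ₑ ^ 2 ∂μ) ^ (1 / 2 : ℝ) := by
    simp [eLpNorm_eq_lintegral_rpow_enorm_toReal two_ne_zero ENNReal.ofNat_ne_top]
  simpa [hF] using h.ennrpow_const (1 / 2 : ℝ)

section DyadicAverage

variable {X ι : Type*} [MeasurableSpace X] [Fintype ι] [DecidableEq ι]

noncomputable def dyadicAverage (μ : Measure X) (ψ : ι → X → ℝ) (A : Set X) (g : X → ℝ)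
    (k : ℕ) (x : X) : ℝ :=
  ∑ j ∈ Fintype.piFinset (fun _ : ι => dyadicRange k),
    (dyadicCell ψ k j ∩ A).indicator (fun _ => ⨍ y in dyadicCell ψ k j ∩ A, g y ∂μ) x

variable {μ : Measure X} {ψ : ι → X → ℝ} {A : Set X} {g : X → ℝ} {L : ℝ}

theorem lintegral_sq_enorm_dyadicAverage_sub_le (hψ : ∀ i, Measurable (ψ i))
    (hA : MeasurableSet A) (hAfin : μ A ≠ ∞) (hg : MemLp g 2 μ)
    (hL : ∀ x y δ, (∀ i, |ψ i x - ψ i y| ≤ δ) → |g x - g y| ≤ L * δ) (k : ℕ) :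
    ∫⁻ x, ‖dyadicAverage μ ψ A g k x - A.indicator g x‖ₑ ^ 2 ∂μ ≤
      ENNReal.ofReal (L * (2 ^ k)⁻¹) ^ 2 * μ A +
        4 * ∫⁻ x in {x | 2 ^ k ≤ ∑ i, |ψ i x|}, ‖g x‖ₑ ^ 2 ∂μ := by
  have hU : ⋃ j ∈ Fintype.piFinset (fun _ : ι => dyadicRange k), dyadicCell ψ k j ∩ A = A := by
    rw [← iUnion₂_inter, iUnion_dyadicCell, univ_inter]
  have key := lintegral_sq_enorm_sum_indicator_setAverage_sub_le (μ := μ)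
    (fun j _ => (measurableSet_dyadicCell hψ k j).inter hA)
    ((pairwiseDisjoint_dyadicCell ψ k).mono fun _ => inter_subset_left)
    (fun j _ => measure_ne_top_of_subset inter_subset_right hAfin) hg _
    fun j _ => (dyadicCell_subset_tail_or_abs_sub_le ψ k j).imp inter_subset_left.trans
      fun hshort x hx y hy => hL x y _ (hshort x hx.1 y hy.1)
  rwa [hU] at key

theorem tendsto_eLpNorm_dyadicAverage_sub (hψ : ∀ i, Measurable (ψ i)) (hA : MeasurableSet A)
    (hAfin : μ A ≠ ∞) (hg : MemLp g 2 μ)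
    (hL : ∀ x y δ, (∀ i, |ψ i x - ψ i y| ≤ δ) → |g x - g y| ≤ L * δ) :
    Tendsto (fun k => eLpNorm (fun x => dyadicAverage μ ψ A g k x - A.indicator g x) 2 μ)
      atTop (𝓝 0) := by
  have hε : Tendsto (fun k : ℕ => ENNReal.ofReal (L * (2 ^ k)⁻¹)) atTop (𝓝 0) := by
    simpa using ENNReal.tendsto_ofReal
      ((tendsto_inv_atTop_zero.comp (tendsto_pow_atTop_atTop_of_one_lt one_lt_two)).const_mul L)
  have htail : Tendsto (fun k => ∫⁻ x in {x | (2 : ℝ) ^ k ≤ ∑ i, |ψ i x|}, ‖g x‖ₑ ^ 2 ∂μ)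
      atTop (𝓝 0) :=
    tendsto_setLIntegral_setOf_le_zero (hg.aemeasurable.enorm.pow_const 2)
      (by simpa [enorm_pow] using hg.integrable_sq.2.ne)
      (Finset.measurable_sum _ fun i _ => (hψ i).abs)
      (tendsto_pow_atTop_atTop_of_one_lt one_lt_two)
  have hlim := (ENNReal.Tendsto.mul_const (ENNReal.Tendsto.pow (n := 2) hε) (.inr hAfin)).add
    (ENNReal.Tendsto.const_mul (a := 4) htail (.inr ENNReal.ofNat_ne_top))
  refine tendsto_eLpNorm_two_zero_of_lintegral <| tendsto_of_tendsto_of_tendsto_of_le_of_le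
    tendsto_const_nhds ?_ (fun _ => zero_le)
    (lintegral_sq_enorm_dyadicAverage_sub_le hψ hA hAfin hg hL)
  simpa using hlim

end DyadicAverage

theorem stmt15_general {X : Type*} [MeasurableSpace X]
    (μ : Measure X)
    (φ : ℕ → X → ℝ) (hφmeas : ∀ i, Measurable (φ i)) (hφL2 : ∀ i, MemLp (φ i) 2 μ)
    (Xl : Set X) (hXl : MeasurableSet Xl) (hXlfin : μ Xl ≠ ∞)
    (m : ℕ) (f : X → ℝ) :
    -- the Galerkin projection `π_m f`
    let πm : X → ℝ := fun x => ∑ i ∈ Finset.range m, (∫ y, f y * φ i y ∂μ) * φ i x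
    -- dyadic level sets of `φ i`, including the two tail sets
    let level : ℕ → ℕ → ℤ → Set X := fun i k j =>
      if j = (2 : ℤ) ^ (2 * k) then {x | (2 : ℝ) ^ k < φ i x}
      else if j = -((2 : ℤ) ^ (2 * k)) - 1 then {x | φ i x ≤ -((2 : ℝ) ^ k)}
      else {x | (j : ℝ) / 2 ^ k < φ i x ∧ φ i x ≤ ((j : ℝ) + 1) / 2 ^ k}
    -- the cells of the partition `P_{m,k}` generated by `φ 0, …, φ (m-1)`
    let cell : ℕ → (Fin m → ℤ) → Set X := fun k j => ⋂ i : Fin m, level i.1 k (j i)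
    let cellIdx : ℕ → Finset (Fin m → ℤ) := fun k =>
      Fintype.piFinset fun _ => Finset.Icc (-((2 : ℤ) ^ (2 * k)) - 1) ((2 : ℤ) ^ (2 * k))
    -- the average of `π_m f` over a cell, with respect to `μ_l = μ(· ∩ X_l)`
    let α : ℕ → (Fin m → ℤ) → ℝ := fun k j =>
      (μ (cell k j ∩ Xl)).toReal⁻¹ * ∫ x in cell k j ∩ Xl, πm x ∂μ
    -- the piecewise constant projection `π_{m,l,k} f`
    let πmlk : ℕ → X → ℝ := fun k x =>
      ∑ j ∈ cellIdx k, (cell k j ∩ Xl).indicator (fun _ => α k j) x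
    Tendsto (fun k => eLpNorm (fun x => πmlk k x - Xl.indicator πm x) 2 μ)
      atTop (nhds 0) := by
  intro πm level cell cellIdx α πmlk
  set ψ : Fin m → X → ℝ := fun i => φ i
  have hcell k j : cell k j = dyadicCell ψ k j :=
    Set.iInter_congr fun i => by simp only [level, dyadicBin]; split_ifs <;> rfl
  have hπmlk k x : πmlk k x = dyadicAverage μ ψ Xl πm k x := by
    refine Finset.sum_congr rfl fun j _ => ?_
    simp only [α, hcell, setAverage_eq, smul_eq_mul]
    rfl
  have hLip x y δ (h : ∀ i, |ψ i x - ψ i y| ≤ δ) :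
      |πm x - πm y| ≤ (∑ i ∈ Finset.range m, |∫ y, f y * φ i y ∂μ|) * δ :=
    abs_sum_mul_sub_sum_mul_le _ _ fun i hi => h ⟨i, Finset.mem_range.1 hi⟩
  have hπm : MemLp πm 2 μ := memLp_finsetSum _ fun i _ => (hφL2 i).const_mul _
  simpa only [hπmlk] using
    tendsto_eLpNorm_dyadicAverage_sub (ψ := ψ) (fun i => hφmeas i) hXl hXlfin hπm hLip

/-- Convergence of the conditional-expectation-type projections `π_{m,l,k}` to
`π_m(f)·𝟏_{X_l}` in `L²` as the dyadic partitions refine (`k → ∞`). -/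
theorem stmt15 {X : Type*} [MeasurableSpace X] [MeasurableSpace.CountablyGenerated X]
    (μ : Measure X) [SigmaFinite μ]
    (φ : ℕ → X → ℝ) (hφmeas : ∀ i, Measurable (φ i)) (hφL2 : ∀ i, MemLp (φ i) 2 μ)
    (horth : ∀ i j, (∫ x, φ i x * φ j x ∂μ) = if i = j then 1 else 0)
    (Xl : Set X) (hXl : MeasurableSet Xl) (hXlfin : μ Xl ≠ ∞)
    (m : ℕ) (f : X → ℝ) (hf : MemLp f 2 μ) :
    -- the Galerkin projection `π_m f`
    let πm : X → ℝ := fun x => ∑ i ∈ Finset.range m, (∫ y, f y * φ i y ∂μ) * φ i x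
    -- dyadic level sets of `φ i`, including the two tail sets
    let level : ℕ → ℕ → ℤ → Set X := fun i k j =>
      if j = (2 : ℤ) ^ (2 * k) then {x | (2 : ℝ) ^ k < φ i x}
      else if j = -((2 : ℤ) ^ (2 * k)) - 1 then {x | φ i x ≤ -((2 : ℝ) ^ k)}
      else {x | (j : ℝ) / 2 ^ k < φ i x ∧ φ i x ≤ ((j : ℝ) + 1) / 2 ^ k}
    -- the cells of the partition `P_{m,k}` generated by `φ 0, …, φ (m-1)`
    let cell : ℕ → (Fin m → ℤ) → Set X := fun k j => ⋂ i : Fin m, level i.1 k (j i)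
    let cellIdx : ℕ → Finset (Fin m → ℤ) := fun k =>
      Fintype.piFinset fun _ => Finset.Icc (-((2 : ℤ) ^ (2 * k)) - 1) ((2 : ℤ) ^ (2 * k))
    -- the average of `π_m f` over a cell, with respect to `μ_l = μ(· ∩ X_l)`
    let α : ℕ → (Fin m → ℤ) → ℝ := fun k j =>
      (μ (cell k j ∩ Xl)).toReal⁻¹ * ∫ x in cell k j ∩ Xl, πm x ∂μ
    -- the piecewise constant projection `π_{m,l,k} f`
    let πmlk : ℕ → X → ℝ := fun k x =>
      ∑ j ∈ cellIdx k, (cell k j ∩ Xl).indicator (fun _ => α k j) x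
    Tendsto (fun k => eLpNorm (fun x => πmlk k x - Xl.indicator πm x) 2 μ)
      atTop (nhds 0) :=
  stmt15_general μ φ hφmeas hφL2 Xl hXl hXlfin m f
end

section
/- Let A be a countably generated, uniformly closed, point-separating algebra of bounded real-valued functions on a nonempty set X, and let E be a sup-norm-separable quadratic form on A (i.e. there is a generating sequence (f_n) ⊂ A with E(f_n) < ∞ for all n) on which normal contractions operate. Then the effective domain D = {f ∈ A : E(f) < ∞} is a uniformly dense subalgebra of A. -/
open scoped ENNReal BigOperators
open Filter

/-!
Addition is a normal contraction, and so is `(s, t) ↦ p s * p t / (2C)` for the clipping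
`p t = max (min t C) (-C)`; since `p` is the identity on functions bounded by `C`, the product of
two finite-energy functions is a rescaled normal contraction of them, and `E` is homogeneous
under rescaling. For density, the functions of `A` that are uniform limits of finite-energy
functions form a uniformly closed subalgebra (products converge because `A` consists of bounded
functions; closedness is a diagonal argument) containing every `fn`, hence all of `A`.
-/

section UniformApproximation

variable {X : Type*}

def uniformSeqClosure (S : Set (X → ℝ)) : Set (X → ℝ) :=
  {g | ∃ h : ℕ → X → ℝ, (∀ n, h n ∈ S) ∧ TendstoUniformly h g atTop}

variable {S : Set (X → ℝ)}

lemma subset_uniformSeqClosure : S ⊆ uniformSeqClosure S :=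
  fun f hf => ⟨fun _ => f, fun _ => hf,
    fun _ hu => Eventually.of_forall fun _ _ => refl_mem_uniformity hu⟩

lemma add_mem_uniformSeqClosure (hS : ∀ f ∈ S, ∀ g ∈ S, f + g ∈ S) {f g : X → ℝ}
    (hf : f ∈ uniformSeqClosure S) (hg : g ∈ uniformSeqClosure S) :
    f + g ∈ uniformSeqClosure S := by
  obtain ⟨F, hFS, hFf⟩ := hf
  obtain ⟨G, hGS, hGg⟩ := hg
  exact ⟨F + G, fun n => hS _ (hFS n) _ (hGS n), hFf.add hGg⟩

lemma smul_mem_uniformSeqClosure (hS : ∀ (c : ℝ), ∀ f ∈ S, c • f ∈ S) (c : ℝ) {f : X → ℝ}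
    (hf : f ∈ uniformSeqClosure S) : c • f ∈ uniformSeqClosure S := by
  obtain ⟨F, hFS, hFf⟩ := hf
  exact ⟨fun n => c • F n, fun n => hS c _ (hFS n),
    (uniformContinuous_const_smul c).comp_tendstoUniformly hFf⟩

lemma TendstoUniformly.mul_of_abs_le {ι : Type*} {l : Filter ι} {F G : ι → X → ℝ}
    {f g : X → ℝ} {C : ℝ} (hFf : TendstoUniformly F f l) (hGg : TendstoUniformly G g l)
    (hf : ∀ x, |f x| ≤ C) (hg : ∀ x, |g x| ≤ C) : TendstoUniformly (F * G) (f * g) l := by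
  rw [Metric.tendstoUniformly_iff] at hFf hGg ⊢
  intro ε hε
  set δ := min 1 (ε / (2 * |C| + 2))
  have hδ : 0 < δ := lt_min one_pos (by positivity)
  have hδε : δ * (2 * |C| + 2) ≤ ε := (le_div_iff₀ (by positivity)).1 (min_le_right _ _)
  filter_upwards [hFf δ hδ, hGg δ hδ] with n hF hG x
  specialize hF x
  specialize hG x
  rw [dist_comm, Real.dist_eq] at hF hG
  rw [dist_comm, Real.dist_eq, Pi.mul_apply, Pi.mul_apply]
  have hfx : |f x| ≤ |C| := (hf x).trans (le_abs_self C)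
  have hgx : |g x| ≤ |C| := (hg x).trans (le_abs_self C)
  calc |F n x * G n x - f x * g x|
      = |(F n x - f x) * (G n x - g x) + f x * (G n x - g x) + (F n x - f x) * g x| := by
        congr 1; ring
    _ ≤ |F n x - f x| * |G n x - g x| + |f x| * |G n x - g x| + |F n x - f x| * |g x| := by
        simp only [← abs_mul]
        exact (abs_add_le _ _).trans (add_le_add_left (abs_add_le _ _) _)
    _ ≤ δ * δ + |C| * δ + δ * |C| := by gcongr
    _ ≤ δ * (2 * |C| + 1) := by nlinarith [min_le_left 1 (ε / (2 * |C| + 2))]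
    _ < ε := by linarith

lemma mul_mem_uniformSeqClosure (hS : ∀ f ∈ S, ∀ g ∈ S, f * g ∈ S) {f g : X → ℝ} {C : ℝ}
    (hf : f ∈ uniformSeqClosure S) (hg : g ∈ uniformSeqClosure S)
    (hfC : ∀ x, |f x| ≤ C) (hgC : ∀ x, |g x| ≤ C) : f * g ∈ uniformSeqClosure S := by
  obtain ⟨F, hFS, hFf⟩ := hf
  obtain ⟨G, hGS, hGg⟩ := hg
  exact ⟨F * G, fun n => hS _ (hFS n) _ (hGS n), hFf.mul_of_abs_le hGg hfC hgC⟩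

lemma mem_uniformSeqClosure_of_tendstoUniformly {g : ℕ → X → ℝ} {f : X → ℝ}
    (hg : ∀ n, g n ∈ uniformSeqClosure S) (hgf : TendstoUniformly g f atTop) :
    f ∈ uniformSeqClosure S := by
  have hclose : ∀ n : ℕ, ∃ s ∈ S, ∀ x, dist (g n x) (s x) < 1 / ((n : ℝ) + 1) := by
    intro n
    obtain ⟨F, hFS, hF⟩ := hg n
    obtain ⟨m, hm⟩ := (Metric.tendstoUniformly_iff.1 hF _ Nat.one_div_pos_of_nat).exists
    exact ⟨F m, hFS m, hm⟩
  choose s hsS hs using hclose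
  refine ⟨s, hsS, Metric.tendstoUniformly_iff.2 fun ε hε => ?_⟩
  have hsmall : ∀ᶠ n : ℕ in atTop, 1 / ((n : ℝ) + 1) < ε / 2 :=
    tendsto_one_div_add_atTop_nhds_zero_nat.eventually (gt_mem_nhds (half_pos hε))
  filter_upwards [Metric.tendstoUniformly_iff.1 hgf _ (half_pos hε), hsmall] with n hn hn' x
  calc dist (f x) (s n x) ≤ dist (f x) (g n x) + dist (g n x) (s n x) := dist_triangle _ _ _
    _ < ε / 2 + ε / 2 := add_lt_add (hn x) ((hs n x).trans hn')
    _ = ε := add_halves ε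

end UniformApproximation

lemma isNormalContraction_add : IsNormalContraction (fun x : Fin 2 → ℝ => x 0 + x 1) := by
  refine ⟨by simp, fun x y => ?_⟩
  rw [Fin.sum_univ_two, add_sub_add_comm]
  exact abs_add_le _ _

lemma abs_mul_sub_mul_le {a b c d C : ℝ} (ha : |a| ≤ C) (hd : |d| ≤ C) :
    |a * b - c * d| ≤ C * (|a - c| + |b - d|) := by
  calc |a * b - c * d| = |a * (b - d) + (a - c) * d| := by ring_nf
    _ ≤ |a| * |b - d| + |a - c| * |d| := by
        simp only [← abs_mul]
        exact abs_add_le _ _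
    _ ≤ C * |b - d| + |a - c| * C := by gcongr
    _ = C * (|a - c| + |b - d|) := by ring

lemma isNormalContraction_mul_comp {p : ℝ → ℝ} {C : ℝ} (hC : 0 < C) (hp_zero : p 0 = 0)
    (hp_lip : ∀ s t, |p s - p t| ≤ |s - t|) (hp_abs : ∀ t, |p t| ≤ C) :
    IsNormalContraction (fun x : Fin 2 → ℝ => p (x 0) * p (x 1) / (2 * C)) := by
  refine ⟨by simp [hp_zero], fun x y => ?_⟩
  rw [Fin.sum_univ_two, ← sub_div, abs_div, abs_of_pos (by positivity : (0 : ℝ) < 2 * C),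
    div_le_iff₀ (by positivity)]
  calc |p (x 0) * p (x 1) - p (y 0) * p (y 1)|
      ≤ C * (|p (x 0) - p (y 0)| + |p (x 1) - p (y 1)|) :=
        abs_mul_sub_mul_le (hp_abs _) (hp_abs _)
    _ ≤ C * (|x 0 - y 0| + |x 1 - y 1|) := by gcongr ?_ * (?_ + ?_) <;> exact hp_lip _ _
    _ ≤ (|x 0 - y 0| + |x 1 - y 1|) * (2 * C) := by
        nlinarith [abs_nonneg (x 0 - y 0), abs_nonneg (x 1 - y 1)]

lemma abs_max_min_sub_max_min_le (C s t : ℝ) :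
    |max (min s C) (-C) - max (min t C) (-C)| ≤ |s - t| :=
  (abs_max_sub_max_le_abs _ _ _).trans <| by
    simpa using abs_min_sub_min_le_max s C t C

section EffectiveDomain

variable {X : Type*} {A : Set (X → ℝ)} {E : (X → ℝ) → ℝ≥0∞} {f g : X → ℝ}

def effectiveDomain (A : Set (X → ℝ)) (E : (X → ℝ) → ℝ≥0∞) : Set (X → ℝ) :=
  {h ∈ A | E h < ∞}

lemma energy_comp_lt_top (hop : NormalContractionsOperate A E) {k : ℕ}
    {F : (Fin k → ℝ) → ℝ} (hF : IsNormalContraction F) {f : Fin k → X → ℝ}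
    (hf : ∀ i, f i ∈ effectiveDomain A E) : E (fun x => F (fun i => f i x)) < ∞ := by
  rw [← ENNReal.rpow_lt_top_iff_of_pos (by norm_num : (0 : ℝ) < 1 / 2)]
  refine (hop k F hF f fun i => (hf i).1).trans_lt (ENNReal.sum_lt_top.2 fun i _ => ?_)
  exact ENNReal.rpow_lt_top_of_nonneg (by norm_num) (hf i).2.ne

lemma energy_comp₂_lt_top (hop : NormalContractionsOperate A E) {F : (Fin 2 → ℝ) → ℝ}
    (hF : IsNormalContraction F) (hf : f ∈ effectiveDomain A E) (hg : g ∈ effectiveDomain A E) :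
    E (fun x => F ![f x, g x]) < ∞ := by
  convert energy_comp_lt_top hop hF (f := ![f, g]) (Fin.forall_fin_two.2 ⟨hf, hg⟩) using 4
  ext i
  fin_cases i <;> rfl

lemma add_mem_effectiveDomain (hAadd : ∀ f ∈ A, ∀ g ∈ A, f + g ∈ A)
    (hop : NormalContractionsOperate A E) (hf : f ∈ effectiveDomain A E)
    (hg : g ∈ effectiveDomain A E) : f + g ∈ effectiveDomain A E :=
  ⟨hAadd f hf.1 g hg.1, energy_comp₂_lt_top hop isNormalContraction_add hf hg⟩

lemma smul_mem_effectiveDomain (hAsmul : ∀ (c : ℝ), ∀ f ∈ A, c • f ∈ A)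
    (hscale : ∀ (c : ℝ) (f : X → ℝ), f ∈ A → E (c • f) = ENNReal.ofReal (c ^ 2) * E f)
    (c : ℝ) (hf : f ∈ effectiveDomain A E) : c • f ∈ effectiveDomain A E :=
  ⟨hAsmul c f hf.1, by
    rw [hscale c f hf.1]
    exact ENNReal.mul_lt_top ENNReal.ofReal_lt_top hf.2⟩

lemma mul_mem_effectiveDomain (hAmul : ∀ f ∈ A, ∀ g ∈ A, f * g ∈ A)
    (hAsmul : ∀ (c : ℝ), ∀ f ∈ A, c • f ∈ A)
    (hscale : ∀ (c : ℝ) (f : X → ℝ), f ∈ A → E (c • f) = ENNReal.ofReal (c ^ 2) * E f)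
    (hop : NormalContractionsOperate A E) {C : ℝ} (hC : 0 < C)
    (hf : f ∈ effectiveDomain A E) (hg : g ∈ effectiveDomain A E)
    (hfC : ∀ x, |f x| ≤ C) (hgC : ∀ x, |g x| ≤ C) : f * g ∈ effectiveDomain A E := by
  set p : ℝ → ℝ := fun t => max (min t C) (-C)
  have hp : ∀ t, |t| ≤ C → p t = t := fun t ht => by
    simp [p, (abs_le.1 ht).1, (abs_le.1 ht).2]
  have hF := isNormalContraction_mul_comp hC (hp 0 (by simpa using hC.le))
    (abs_max_min_sub_max_min_le C)
    fun t => abs_le.2 ⟨le_max_right _ _, max_le (min_le_right _ _) (by linarith)⟩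
  have hu : (fun x => p (![f x, g x] 0) * p (![f x, g x] 1) / (2 * C)) =
      (2 * C)⁻¹ • (f * g) := by
    funext x
    simp [hp _ (hfC x), hp _ (hgC x), div_eq_inv_mul]
  have hfg : f * g = (2 * C) • ((2 * C)⁻¹ • (f * g)) := by
    rw [smul_smul, mul_inv_cancel₀ (by positivity), one_smul]
  rw [hfg]
  refine smul_mem_effectiveDomain hAsmul hscale _ ⟨hAsmul _ _ (hAmul f hf.1 g hg.1), ?_⟩
  rw [← hu]
  exact energy_comp₂_lt_top hop hF hf hg

end EffectiveDomain

lemma exists_pos_common_bound {X : Type*} {f g : X → ℝ} (hf : ∃ C, ∀ x, |f x| ≤ C)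
    (hg : ∃ C, ∀ x, |g x| ≤ C) : ∃ C > 0, (∀ x, |f x| ≤ C) ∧ ∀ x, |g x| ≤ C := by
  obtain ⟨Cf, hCf⟩ := hf
  obtain ⟨Cg, hCg⟩ := hg
  refine ⟨max (max Cf Cg) 1, by positivity, fun x => ?_, fun x => ?_⟩
  · exact (hCf x).trans ((le_max_left _ _).trans (le_max_left _ _))
  · exact (hCg x).trans ((le_max_right _ _).trans (le_max_left _ _))

theorem stmt19_general {X : Type*} (A : Set (X → ℝ)) (E : (X → ℝ) → ℝ≥0∞)
    -- `A` is an algebra of bounded functions …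
    (hAadd : ∀ f ∈ A, ∀ g ∈ A, f + g ∈ A)
    (hAmul : ∀ f ∈ A, ∀ g ∈ A, f * g ∈ A)
    (hAsmul : ∀ (c : ℝ), ∀ f ∈ A, c • f ∈ A)
    (hbdd : ∀ f ∈ A, ∃ C : ℝ, ∀ x, |f x| ≤ C)
    -- … uniformly closed …
    (hclosed : ∀ (g : ℕ → X → ℝ) (h : X → ℝ), (∀ n, g n ∈ A) →
      TendstoUniformly g h atTop → h ∈ A)
    -- … and generated, as a uniformly closed algebra, by the sequence `fn`:
    (fn : ℕ → X → ℝ) (hfnA : ∀ n, fn n ∈ A)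
    (hgen : ∀ B : Set (X → ℝ),
      (∀ f ∈ B, ∀ g ∈ B, f + g ∈ B) →
      (∀ f ∈ B, ∀ g ∈ B, f * g ∈ B) →
      (∀ (c : ℝ), ∀ f ∈ B, c • f ∈ B) →
      (∀ (g : ℕ → X → ℝ) (h : X → ℝ), (∀ n, g n ∈ B) →
        TendstoUniformly g h atTop → h ∈ B) →
      (∀ n, fn n ∈ B) → A ⊆ B)
    -- `E` is a quadratic form on `A`, sup-norm-separable along `fn` …
    (hscale : ∀ (c : ℝ) (f : X → ℝ), f ∈ A → E (c • f) = ENNReal.ofReal (c ^ 2) * E f)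
    (hfnE : ∀ n, E (fn n) < ∞)
    -- … and normal contractions operate on `E`.
    (hop : NormalContractionsOperate A E) :
    -- `D` is a subalgebra …
    (∀ f ∈ {h ∈ A | E h < ∞}, ∀ g ∈ {h ∈ A | E h < ∞},
      f + g ∈ {h ∈ A | E h < ∞} ∧ f * g ∈ {h ∈ A | E h < ∞}) ∧
    (∀ (c : ℝ), ∀ f ∈ {h ∈ A | E h < ∞}, c • f ∈ {h ∈ A | E h < ∞}) ∧
    -- … uniformly dense in `A`:
    (∀ g ∈ A, ∃ h : ℕ → X → ℝ, (∀ n, h n ∈ {h' ∈ A | E h' < ∞}) ∧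
      TendstoUniformly h g atTop) := by
  have hDadd : ∀ f ∈ effectiveDomain A E, ∀ g ∈ effectiveDomain A E,
      f + g ∈ effectiveDomain A E := fun f hf g hg => add_mem_effectiveDomain hAadd hop hf hg
  have hDsmul : ∀ (c : ℝ), ∀ f ∈ effectiveDomain A E, c • f ∈ effectiveDomain A E :=
    fun c f hf => smul_mem_effectiveDomain hAsmul hscale c hf
  have hDmul : ∀ f ∈ effectiveDomain A E, ∀ g ∈ effectiveDomain A E,
      f * g ∈ effectiveDomain A E := by
    intro f hf g hg
    obtain ⟨C, hC, hfC, hgC⟩ := exists_pos_common_bound (hbdd f hf.1) (hbdd g hg.1)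
    exact mul_mem_effectiveDomain hAmul hAsmul hscale hop hC hf hg hfC hgC
  refine ⟨fun f hf g hg => ⟨hDadd f hf g hg, hDmul f hf g hg⟩, hDsmul, fun g hg => ?_⟩
  have hA : A ⊆ A ∩ uniformSeqClosure (effectiveDomain A E) := by
    refine hgen _
      (fun f hf g hg => ⟨hAadd f hf.1 g hg.1, add_mem_uniformSeqClosure hDadd hf.2 hg.2⟩)
      (fun f hf g hg => ?_)
      (fun c f hf => ⟨hAsmul c f hf.1, smul_mem_uniformSeqClosure hDsmul c hf.2⟩)
      (fun g h hg hgh => ⟨hclosed g h (fun n => (hg n).1) hgh,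
        mem_uniformSeqClosure_of_tendstoUniformly (fun n => (hg n).2) hgh⟩)
      fun n => ⟨hfnA n, subset_uniformSeqClosure ⟨hfnA n, hfnE n⟩⟩
    obtain ⟨C, -, hfC, hgC⟩ := exists_pos_common_bound (hbdd f hf.1) (hbdd g hg.1)
    exact ⟨hAmul f hf.1 g hg.1, mul_mem_uniformSeqClosure hDmul hf.2 hg.2 hfC hgC⟩
  exact (hA hg).2

/-- If `E` is a sup-norm-separable quadratic form on a countably generated,
uniformly closed, point-separating algebra `A` of bounded functions and normal
contractions operate on `E`, then the effective domain
`D = {f ∈ A : E f < ∞}` is a uniformly dense subalgebra of `A`. -/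
theorem stmt19 {X : Type*} [Nonempty X] (A : Set (X → ℝ)) (E : (X → ℝ) → ℝ≥0∞)
    -- `A` is an algebra of bounded functions …
    (hAadd : ∀ f ∈ A, ∀ g ∈ A, f + g ∈ A)
    (hAmul : ∀ f ∈ A, ∀ g ∈ A, f * g ∈ A)
    (hAsmul : ∀ (c : ℝ), ∀ f ∈ A, c • f ∈ A)
    (hbdd : ∀ f ∈ A, ∃ C : ℝ, ∀ x, |f x| ≤ C)
    -- … uniformly closed …
    (hclosed : ∀ (g : ℕ → X → ℝ) (h : X → ℝ), (∀ n, g n ∈ A) →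
      TendstoUniformly g h atTop → h ∈ A)
    -- … separating the points of `X` …
    (hsep : ∀ x y : X, x ≠ y → ∃ f ∈ A, f x ≠ f y)
    -- … and generated, as a uniformly closed algebra, by the sequence `fn`:
    (fn : ℕ → X → ℝ) (hfnA : ∀ n, fn n ∈ A)
    (hgen : ∀ B : Set (X → ℝ),
      (∀ f ∈ B, ∀ g ∈ B, f + g ∈ B) →
      (∀ f ∈ B, ∀ g ∈ B, f * g ∈ B) →
      (∀ (c : ℝ), ∀ f ∈ B, c • f ∈ B) →
      (∀ (g : ℕ → X → ℝ) (h : X → ℝ), (∀ n, g n ∈ B) →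
        TendstoUniformly g h atTop → h ∈ B) →
      (∀ n, fn n ∈ B) → A ⊆ B)
    -- `E` is a quadratic form on `A`, sup-norm-separable along `fn` …
    (hscale : ∀ (c : ℝ) (f : X → ℝ), f ∈ A → E (c • f) = ENNReal.ofReal (c ^ 2) * E f)
    (hpar : ∀ f g : X → ℝ, f ∈ A → g ∈ A → E f < ∞ → E g < ∞ →
      E (f + g) + E (f - g) = 2 * E f + 2 * E g)
    (hfnE : ∀ n, E (fn n) < ∞)
    -- … and normal contractions operate on `E`.
    (hop : NormalContractionsOperate A E) :
    -- `D` is a subalgebra …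
    (∀ f ∈ {h ∈ A | E h < ∞}, ∀ g ∈ {h ∈ A | E h < ∞},
      f + g ∈ {h ∈ A | E h < ∞} ∧ f * g ∈ {h ∈ A | E h < ∞}) ∧
    (∀ (c : ℝ), ∀ f ∈ {h ∈ A | E h < ∞}, c • f ∈ {h ∈ A | E h < ∞}) ∧
    -- … uniformly dense in `A`:
    (∀ g ∈ A, ∃ h : ℕ → X → ℝ, (∀ n, h n ∈ {h' ∈ A | E h' < ∞}) ∧
      TendstoUniformly h g atTop) :=
  stmt19_general A E hAadd hAmul hAsmul hbdd hclosed fn hfnA hgen hscale hfnE hop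
end
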